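/- arXiv:1509.05868 — 12 statements merged into one kernel-verified Lean document; each statement's English description precedes it below -/
import Mathlib

section
/- Let A ∈ ℝ^{n×n}, B ∈ ℝ^{n×m}, C ∈ ℝ^{m×n}, D ∈ ℝ^{m×m} be such that (A,B) is reachable, (A,C) is observable, and the transfer function Q(z) = C(zI−A)⁻¹B + D is all-pass. Then A is invertible if and only if D is invertible. -/
/-!
`Bᵀ (z⁻¹I - Aᵀ)⁻¹ Cᵀ + Dᵀ` is the transfer function of the dual system `(Aᵀ, Cᵀ, Bᵀ, Dᵀ)` at
`z⁻¹`, and every transfer function tends to its feedthrough term as `z → ∞`, because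
`(z⁻¹I - M)⁻¹ = z (I - zM)⁻¹ → 0` as `z → 0`.

If `A` is invertible, the dual transfer function is continuous at `0`, and letting `z → ∞` in
the all-pass identity gives `D (Bᵀ (-Aᵀ)⁻¹ Cᵀ + Dᵀ) = I`. If `D` is invertible, letting `z → 0`
shows `Q(z) → (Dᵀ)⁻¹`. Then `z C (zI - A)⁻¹ Aᵏ B → 0` for every `k`, by induction using
`(zI - A)⁻¹ A = z (zI - A)⁻¹ - I`, so by reachability `z C (zI - A)⁻¹ → 0`. For `v ∈ ker A`
we have `z (zI - A)⁻¹ v = v`, hence `C v = 0`, and observability forces `v = 0`.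
-/

open Matrix

noncomputable section

/-- The pair `(A,B)` is reachable: the columns of `B, AB, …, A^{N-1}B` span the state space. -/
def Reachable {N M : Type*} [Fintype N] [DecidableEq N] [Fintype M]
    (A : Matrix N N ℝ) (B : Matrix N M ℝ) : Prop :=
  Submodule.span ℝ
    {v : N → ℝ | ∃ k < Fintype.card N, ∃ j : M, v = (A ^ k) *ᵥ (fun i => B i j)} = ⊤

/-- The pair `(A,C)` is observable: `⋂_{k<N} ker (C A^k) = {0}`. -/
def Observable {N M : Type*} [Fintype N] [DecidableEq N] [Fintype M]
    (A : Matrix N N ℝ) (C : Matrix M N ℝ) : Prop :=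
  ∀ v : N → ℝ, (∀ k < Fintype.card N, (C * A ^ k) *ᵥ v = 0) → v = 0

/-- The transfer function `z ↦ C (zI - A)⁻¹ B + D` is all-pass: for every real `z ≠ 0`
with `zI - A` and `z⁻¹I - Aᵀ` invertible,
`(C(zI−A)⁻¹B + D) (Bᵀ(z⁻¹I−Aᵀ)⁻¹Cᵀ + Dᵀ) = I`. -/
def AllPass {N M : Type*} [Fintype N] [DecidableEq N] [Fintype M] [DecidableEq M]
    (A : Matrix N N ℝ) (B : Matrix N M ℝ) (C : Matrix M N ℝ) (D : Matrix M M ℝ) : Prop :=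
  ∀ z : ℝ, z ≠ 0 → IsUnit (z • (1 : Matrix N N ℝ) - A) →
    IsUnit (z⁻¹ • (1 : Matrix N N ℝ) - Aᵀ) →
    (C * (z • (1 : Matrix N N ℝ) - A)⁻¹ * B + D) *
      (Bᵀ * (z⁻¹ • (1 : Matrix N N ℝ) - Aᵀ)⁻¹ * Cᵀ + Dᵀ) = 1

open Filter Topology

section Resolvent

variable {K N : Type*} [Field K] [Fintype N] [DecidableEq N]

theorem Matrix.eventually_cofinite_isUnit_smul_one_sub (M : Matrix N N K) :
    ∀ᶠ z : K in cofinite, IsUnit (z • (1 : Matrix N N K) - M) := by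
  filter_upwards [M.finite_spectrum.eventually_cofinite_notMem] with z hz
  simpa [spectrum.mem_iff, Algebra.algebraMap_eq_smul_one] using hz

theorem Matrix.eventually_cofinite_isUnit_inv_smul_one_sub (M : Matrix N N K) :
    ∀ᶠ z : K in cofinite, IsUnit (z⁻¹ • (1 : Matrix N N K) - M) :=
  inv_injective.tendsto_cofinite.eventually M.eventually_cofinite_isUnit_smul_one_sub

theorem Matrix.inv_mul_smul_one_sub_self {M : Matrix N N K} {z : K}
    (h : IsUnit (z • (1 : Matrix N N K) - M)) :
    (z • (1 : Matrix N N K) - M)⁻¹ * M = z • (z • (1 : Matrix N N K) - M)⁻¹ - 1 := by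
  have h1 := Matrix.nonsing_inv_mul _ ((Matrix.isUnit_iff_isUnit_det _).mp h)
  rw [Matrix.mul_sub, Matrix.mul_smul, Matrix.mul_one] at h1
  exact eq_sub_of_add_eq (sub_eq_iff_eq_add'.mp h1).symm

end Resolvent

section Continuity

variable {N : Type*} [Fintype N] [DecidableEq N]

theorem Matrix.isOpen_setOf_isUnit : IsOpen {M : Matrix N N ℝ | IsUnit M} := by
  simp_rw [Matrix.isUnit_iff_isUnit_det, isUnit_iff_ne_zero]
  exact isOpen_ne.preimage (continuous_id.matrix_det)

theorem Matrix.continuousAt_inv {M : Matrix N N ℝ} (hM : IsUnit M) :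
    ContinuousAt Inv.inv M := by
  refine continuousAt_matrix_inv M ?_
  rw [Ring.inverse_eq_inv']
  exact continuousAt_inv₀ ((Matrix.isUnit_iff_isUnit_det M).mp hM).ne_zero

theorem Matrix.tendsto_inv_smul_one_sub_inv_nhdsNE_zero (M : Matrix N N ℝ) :
    Tendsto (fun z : ℝ => (z⁻¹ • (1 : Matrix N N ℝ) - M)⁻¹) (𝓝[≠] 0) (𝓝 0) := by
  have hlim : Tendsto (fun z : ℝ => (1 : Matrix N N ℝ) - z • M) (𝓝 0) (𝓝 1) :=
    (show Continuous fun z : ℝ => (1 : Matrix N N ℝ) - z • M by fun_prop).tendsto' 0 1 (by simp)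
  have hunit : ∀ᶠ z in 𝓝 (0 : ℝ), IsUnit ((1 : Matrix N N ℝ) - z • M) :=
    hlim.eventually (Matrix.isOpen_setOf_isUnit.mem_nhds isUnit_one)
  have hsmul : Tendsto (fun z : ℝ => z • ((1 : Matrix N N ℝ) - z • M)⁻¹) (𝓝 0) (𝓝 0) := by
    simpa using tendsto_id.smul ((Matrix.continuousAt_inv isUnit_one).tendsto.comp hlim)
  refine (hsmul.mono_left nhdsWithin_le_nhds).congr' ?_
  filter_upwards [self_mem_nhdsWithin, nhdsWithin_le_nhds hunit] with z (hz : z ≠ 0) hu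
  refine (Matrix.inv_eq_right_inv ?_).symm
  rw [show z⁻¹ • (1 : Matrix N N ℝ) - M = z⁻¹ • (1 - z • M) by
    rw [smul_sub, smul_smul, inv_mul_cancel₀ hz, one_smul]]
  rw [Matrix.smul_mul, Matrix.mul_smul, smul_smul, inv_mul_cancel₀ hz, one_smul,
    Matrix.mul_nonsing_inv _ ((Matrix.isUnit_iff_isUnit_det _).mp hu)]

end Continuity

section TransferFunction

variable {N P Q : Type*} [Fintype N] [DecidableEq N]

def transferFun (A : Matrix N N ℝ) (B : Matrix N P ℝ) (C : Matrix Q N ℝ) (D : Matrix Q P ℝ)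
    (z : ℝ) : Matrix Q P ℝ :=
  C * (z • (1 : Matrix N N ℝ) - A)⁻¹ * B + D

variable (A : Matrix N N ℝ) (B : Matrix N P ℝ) (C : Matrix Q N ℝ) (D : Matrix Q P ℝ)

theorem tendsto_transferFun_inv_nhdsNE_zero :
    Tendsto (fun z => transferFun A B C D z⁻¹) (𝓝[≠] 0) (𝓝 D) := by
  unfold transferFun
  have hcont : Continuous fun X : Matrix N N ℝ => C * X * B + D := by fun_prop
  simpa [Function.comp_def] using
    (hcont.tendsto 0).comp (Matrix.tendsto_inv_smul_one_sub_inv_nhdsNE_zero A)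

theorem continuousAt_transferFun {z : ℝ} (hz : IsUnit (z • (1 : Matrix N N ℝ) - A)) :
    ContinuousAt (transferFun A B C D) z := by
  have hcont : Continuous fun X : Matrix N N ℝ => C * X * B + D := by fun_prop
  exact hcont.continuousAt.comp (f := fun z : ℝ => (z • (1 : Matrix N N ℝ) - A)⁻¹)
    ((Matrix.continuousAt_inv hz).comp (f := fun z : ℝ => z • (1 : Matrix N N ℝ) - A)
      (by fun_prop))

end TransferFunction

section AllPass

variable {N M : Type*} [Fintype N] [DecidableEq N] [Fintype M] [DecidableEq M]
  {A : Matrix N N ℝ} {B : Matrix N M ℝ} {C : Matrix M N ℝ} {D : Matrix M M ℝ}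

theorem AllPass.eventually_cofinite_mul_eq_one (h : AllPass A B C D) :
    ∀ᶠ z in cofinite, transferFun A B C D z * transferFun Aᵀ Cᵀ Bᵀ Dᵀ z⁻¹ = 1 := by
  filter_upwards [eventually_cofinite_ne 0, A.eventually_cofinite_isUnit_smul_one_sub,
    Aᵀ.eventually_cofinite_isUnit_inv_smul_one_sub] with z hz hA hAT
  exact h z hz hA hAT

theorem AllPass.isUnit_D_of_isUnit_A (h : AllPass A B C D) (hA : IsUnit A) : IsUnit D := by
  have hAT : IsUnit ((0 : ℝ) • (1 : Matrix N N ℝ) - Aᵀ) := by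
    simpa using (Matrix.isUnit_transpose A).mpr hA
  have hlim : Tendsto (fun w => transferFun A B C D w⁻¹ * transferFun Aᵀ Cᵀ Bᵀ Dᵀ w) (𝓝[≠] 0)
      (𝓝 (D * transferFun Aᵀ Cᵀ Bᵀ Dᵀ 0)) :=
    (tendsto_transferFun_inv_nhdsNE_zero A B C D).mul
      ((continuousAt_transferFun _ _ _ _ hAT).tendsto.mono_left nhdsWithin_le_nhds)
  have heq : ∀ᶠ w in 𝓝[≠] 0, transferFun A B C D w⁻¹ * transferFun Aᵀ Cᵀ Bᵀ Dᵀ w = 1 := by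
    have hinv := inv_injective.tendsto_cofinite.eventually h.eventually_cofinite_mul_eq_one
    filter_upwards [hinv.filter_mono (nhdsNE_le_cofinite 0)] with w hw
    simpa using hw
  have hD : D * transferFun Aᵀ Cᵀ Bᵀ Dᵀ 0 = 1 :=
    tendsto_nhds_unique hlim (tendsto_const_nhds.congr' (heq.mono fun _ hw => hw.symm))
  exact (Matrix.isUnit_iff_isUnit_det D).mpr (Matrix.isUnit_det_of_right_inverse hD)

theorem AllPass.tendsto_transferFun_nhdsNE_zero (h : AllPass A B C D) (hD : IsUnit D) :
    Tendsto (transferFun A B C D) (𝓝[≠] 0) (𝓝 (Dᵀ)⁻¹) := by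
  have hlim := ((Matrix.continuousAt_inv ((Matrix.isUnit_transpose D).mpr hD)).tendsto.comp
    (tendsto_transferFun_inv_nhdsNE_zero Aᵀ Cᵀ Bᵀ Dᵀ))
  refine hlim.congr' ?_
  filter_upwards [h.eventually_cofinite_mul_eq_one.filter_mono (nhdsNE_le_cofinite 0)] with z hz
  exact Matrix.inv_eq_left_inv hz

end AllPass

section Minimality

variable {α N P Q : Type*} [Fintype N] {l : Filter α}

theorem tendsto_mulVec_zero_of_mem_span {F : α → Matrix Q N ℝ} {s : Set (N → ℝ)}
    (hs : ∀ v ∈ s, Tendsto (fun x => F x *ᵥ v) l (𝓝 0)) {w : N → ℝ}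
    (hw : w ∈ Submodule.span ℝ s) : Tendsto (fun x => F x *ᵥ w) l (𝓝 0) := by
  induction hw using Submodule.span_induction with
  | mem v hv => exact hs v hv
  | zero => simpa using tendsto_const_nhds
  | add v w _ _ hv hw => simpa [Matrix.mulVec_add] using hv.add hw
  | smul c v _ hv => simpa [Matrix.mulVec_smul] using hv.const_smul c

variable [DecidableEq N]

theorem Reachable.tendsto_mulVec_zero [Fintype P] {A : Matrix N N ℝ} {B : Matrix N P ℝ}
    (hreach : Reachable A B) {F : α → Matrix Q N ℝ}
    (hF : ∀ k, Tendsto (fun x => F x * (A ^ k * B)) l (𝓝 0)) (w : N → ℝ) :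
    Tendsto (fun x => F x *ᵥ w) l (𝓝 0) := by
  refine tendsto_mulVec_zero_of_mem_span ?_ (hreach ▸ Submodule.mem_top)
  rintro _ ⟨k, -, j, rfl⟩
  have hcol : Continuous fun X : Matrix Q P ℝ => fun i => X i j := by fun_prop
  refine (((hcol.tendsto 0).comp (hF k)).congr fun x => ?_)
  rw [Function.comp_apply, Matrix.mulVec_mulVec, ← Matrix.mul_assoc]
  rfl

theorem Observable.eq_zero_of_mulVec_eq_zero [Fintype Q] {A : Matrix N N ℝ} {C : Matrix Q N ℝ}
    (hobs : Observable A C) {v : N → ℝ} (hAv : A *ᵥ v = 0) (hCv : C *ᵥ v = 0) : v = 0 :=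
  hobs v fun k _ => by
    cases k with
    | zero => simpa using hCv
    | succ k => rw [pow_succ, ← Matrix.mul_assoc, ← Matrix.mulVec_mulVec, hAv, Matrix.mulVec_zero]

variable {A : Matrix N N ℝ} {B : Matrix N P ℝ} {C : Matrix Q N ℝ} {D L : Matrix Q P ℝ}

theorem tendsto_smul_mul_inv_smul_one_sub_mul_pow_mul
    (h : Tendsto (transferFun A B C D) (𝓝[≠] 0) (𝓝 L)) (k : ℕ) :
    Tendsto (fun z : ℝ => z • (C * (z • (1 : Matrix N N ℝ) - A)⁻¹ * (A ^ k * B))) (𝓝[≠] 0)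
      (𝓝 0) := by
  have hz : Tendsto (fun z : ℝ => z) (𝓝[≠] 0) (𝓝 0) :=
    tendsto_nhdsWithin_of_tendsto_nhds tendsto_id
  induction k with
  | zero =>
    have hCRB : Tendsto (fun z : ℝ => C * (z • (1 : Matrix N N ℝ) - A)⁻¹ * B) (𝓝[≠] 0)
        (𝓝 (L - D)) := by
      simpa [transferFun] using h.sub_const D
    simpa using hz.smul hCRB
  | succ k ih =>
    have hconst : Tendsto (fun z : ℝ => z • (C * (A ^ k * B))) (𝓝[≠] 0) (𝓝 0) := by
      simpa using hz.smul_const (C * (A ^ k * B))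
    have hlim := (hz.smul ih).sub hconst
    rw [zero_smul, sub_zero] at hlim
    refine hlim.congr' ?_
    filter_upwards [A.eventually_cofinite_isUnit_smul_one_sub.filter_mono (nhdsNE_le_cofinite 0)]
      with z hu
    have hstep : C * (z • (1 : Matrix N N ℝ) - A)⁻¹ * (A ^ (k + 1) * B)
        = z • (C * (z • (1 : Matrix N N ℝ) - A)⁻¹ * (A ^ k * B)) - C * (A ^ k * B) := by
      calc _ = C * ((z • (1 : Matrix N N ℝ) - A)⁻¹ * A) * (A ^ k * B) := by
            simp only [pow_succ', Matrix.mul_assoc]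
        _ = _ := by
            rw [Matrix.inv_mul_smul_one_sub_self hu, Matrix.mul_sub, Matrix.mul_one,
              Matrix.mul_smul, Matrix.sub_mul, Matrix.smul_mul]
    rw [hstep, smul_sub]

theorem isUnit_of_tendsto_transferFun_nhdsNE_zero [Fintype P] [Fintype Q]
    (hreach : Reachable A B) (hobs : Observable A C)
    (h : Tendsto (transferFun A B C D) (𝓝[≠] 0) (𝓝 L)) : IsUnit A := by
  refine Matrix.mulVec_injective_iff_isUnit.mp
    ((injective_iff_map_eq_zero A.mulVecLin).mpr fun v hAv => ?_)
  replace hAv : A *ᵥ v = 0 := hAv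
  have hlim := hreach.tendsto_mulVec_zero
    (F := fun z : ℝ => z • (C * (z • (1 : Matrix N N ℝ) - A)⁻¹)) (fun k => by
      simpa only [Matrix.smul_mul, Matrix.mul_assoc] using
        tendsto_smul_mul_inv_smul_one_sub_mul_pow_mul h k) v
  have hCv : Tendsto (fun z : ℝ => (z • (C * (z • (1 : Matrix N N ℝ) - A)⁻¹)) *ᵥ v) (𝓝[≠] 0)
      (𝓝 (C *ᵥ v)) := by
    refine tendsto_const_nhds.congr' ?_
    filter_upwards [self_mem_nhdsWithin,
      A.eventually_cofinite_isUnit_smul_one_sub.filter_mono (nhdsNE_le_cofinite 0)]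
      with z (hz : z ≠ 0) hu
    have hres : (z • (1 : Matrix N N ℝ) - A) *ᵥ v = z • v := by
      rw [Matrix.sub_mulVec, Matrix.smul_mulVec, Matrix.one_mulVec, hAv, sub_zero]
    have hv : (z • (1 : Matrix N N ℝ) - A)⁻¹ *ᵥ (z • v) = v := by
      rw [← hres, Matrix.mulVec_mulVec,
        Matrix.nonsing_inv_mul _ ((Matrix.isUnit_iff_isUnit_det _).mp hu), Matrix.one_mulVec]
    rw [Matrix.smul_mulVec, ← Matrix.mulVec_mulVec, ← Matrix.mulVec_smul, ← Matrix.mulVec_smul,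
      hv]
  exact hobs.eq_zero_of_mulVec_eq_zero hAv (tendsto_nhds_unique hCv hlim)

end Minimality

theorem allpass_A_invertible_iff_D_invertible
    (n m : ℕ) (A : Matrix (Fin n) (Fin n) ℝ) (B : Matrix (Fin n) (Fin m) ℝ)
    (C : Matrix (Fin m) (Fin n) ℝ) (D : Matrix (Fin m) (Fin m) ℝ)
    (hreach : Reachable A B) (hobs : Observable A C) (hap : AllPass A B C D) :
    IsUnit A ↔ IsUnit D :=
  ⟨hap.isUnit_D_of_isUnit_A, fun hD =>
    isUnit_of_tendsto_transferFun_nhdsNE_zero hreach hobs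
      (hap.tendsto_transferFun_nhdsNE_zero hD)⟩
end
end

section
/- Let A ∈ ℝ^{n×n}, B ∈ ℝ^{n×m}, C ∈ ℝ^{m×n}, D ∈ ℝ^{m×m} be such that (A,B) is reachable, (A,C) is observable, and Q(z) = C(zI−A)⁻¹B + D is all-pass. If P₁ and P₂ both satisfy equations (P): A P Aᵀ − P = B Bᵀ, B Dᵀ = A P Cᵀ, D Dᵀ − C P Cᵀ = I, then P₁ = P₂. Dually, if Q₁ and Q₂ both satisfy equations (Q): Aᵀ Q A − Q = Cᵀ C, Cᵀ D = Aᵀ Q B, Dᵀ D − Bᵀ Q B = I, then Q₁ = Q₂. -/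
/-!
The difference `Δ` of two solutions of (P) satisfies `A Δ Aᵀ = Δ`, `A Δ Cᵀ = 0`, `C Δ Cᵀ = 0`.
Observability applied to `Δ Cᵀ`, which is killed by `C` and by `A`, gives `Δ Cᵀ = 0`. Then
`Δ = Aᵏ Δ (Aᵀ)ᵏ` puts `Δ (Aᵀ)ˡ Cᵀ` in the range of `Aⁿ`, while `Aˡ` kills it; since the kernels
of the powers of `A` stabilise at `n` (Fitting), `Δ (Aᵀ)ˡ Cᵀ = 0` for all `l`, and observability
gives `Δ = 0`. The equations (Q) are (P) for the dual system `(Aᵀ, Cᵀ, Bᵀ, Dᵀ)`, which is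
observable because `(A, B)` is reachable.
-/

open Matrix

noncomputable section

namespace Matrix

variable {K p q r s : Type*} [Field K] [Fintype p] [DecidableEq p]

theorem pow_card_mul_eq_zero_of_pow_mul_eq_zero (M : Matrix p p K) {k : ℕ}
    (hk : Fintype.card p ≤ k) {Z : Matrix p q K} (h : M ^ k * Z = 0) :
    M ^ Fintype.card p * Z = 0 := by
  have hker : LinearMap.ker (toLin' M ^ k) = LinearMap.ker (toLin' M ^ Fintype.card p) := by
    simpa using Module.End.ker_pow_eq_ker_pow_finrank_of_le (f := toLin' M) (by simpa using hk)
  ext i j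
  have hcol : (fun i => Z i j) ∈ LinearMap.ker (toLin' M ^ k) := by
    rw [LinearMap.mem_ker, ← toLin'_pow, toLin'_apply]
    exact funext fun i => congrFun (congrFun h i) j
  rw [hker, LinearMap.mem_ker, ← toLin'_pow, toLin'_apply] at hcol
  exact congrFun hcol i

variable [Fintype r] [DecidableEq r]

theorem mul_pow_mul_eq_zero_of_mul_mul_eq_self {M : Matrix p p K} {R : Matrix r r K}
    {X : Matrix p r K} {E : Matrix r s K} (hX : M * X * R = X) (hXE : X * E = 0) (l : ℕ) :
    X * R ^ l * E = 0 := by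
  have hpow : ∀ k, M ^ k * X * R ^ k = X := by
    intro k
    induction k with
    | zero => simp
    | succ k ih =>
      calc M ^ (k + 1) * X * R ^ (k + 1) = M * (M ^ k * X * R ^ k) * R := by
            rw [pow_succ', pow_succ]; simp only [Matrix.mul_assoc]
        _ = X := by rw [ih, hX]
  set Z := X * R ^ Fintype.card p * (R ^ l * E)
  have hrange : X * R ^ l * E = M ^ Fintype.card p * Z := by
    conv_lhs => rw [← hpow (Fintype.card p)]
    simp only [Z, Matrix.mul_assoc]
  have hkill : M ^ l * (X * R ^ l * E) = 0 := by
    calc M ^ l * (X * R ^ l * E) = M ^ l * X * R ^ l * E := by simp only [Matrix.mul_assoc]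
      _ = 0 := by rw [hpow, hXE]
  rw [hrange] at hkill ⊢
  exact pow_card_mul_eq_zero_of_pow_mul_eq_zero M (Nat.le_add_left _ l)
    (by rwa [pow_add, Matrix.mul_assoc])

end Matrix

namespace Observable

variable {N M P : Type*} [Fintype N] [DecidableEq N] [Fintype M]
  {A : Matrix N N ℝ} {C : Matrix M N ℝ}

theorem eq_zero_of_forall_mul_pow_mul_eq_zero (hobs : Observable A C) {X : Matrix N P ℝ}
    (h : ∀ k, C * A ^ k * X = 0) : X = 0 := by
  ext i j
  refine congrFun (hobs (fun i => X i j) fun k _ => ?_) i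
  exact funext fun i => congrFun (congrFun (h k) i) j

theorem eq_zero_of_stein {Δ : Matrix N N ℝ} (hobs : Observable A C) (hA : A * Δ * Aᵀ = Δ)
    (hAC : A * Δ * Cᵀ = 0) (hCC : C * Δ * Cᵀ = 0) : Δ = 0 := by
  have hΔC : Δ * Cᵀ = 0 := hobs.eq_zero_of_forall_mul_pow_mul_eq_zero fun k => by
    cases k with
    | zero => simpa [Matrix.mul_assoc] using hCC
    | succ k => rw [pow_succ, Matrix.mul_assoc, Matrix.mul_assoc, ← Matrix.mul_assoc A, hAC,
        Matrix.mul_zero, Matrix.mul_zero]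
  have hΔt : Δᵀ = 0 := hobs.eq_zero_of_forall_mul_pow_mul_eq_zero fun k => by
    rw [← transpose_transpose (C * A ^ k * Δᵀ)]
    simp [transpose_pow, Matrix.mul_assoc, mul_pow_mul_eq_zero_of_mul_mul_eq_self hA hΔC k]
  exact transpose_eq_zero.mp hΔt

theorem eq_of_stein {P₁ P₂ : Matrix N N ℝ} (hobs : Observable A C)
    (hA : A * P₁ * Aᵀ - P₁ = A * P₂ * Aᵀ - P₂) (hAC : A * P₁ * Cᵀ = A * P₂ * Cᵀ)
    (hCC : C * P₁ * Cᵀ = C * P₂ * Cᵀ) : P₁ = P₂ := by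
  refine sub_eq_zero.mp (hobs.eq_zero_of_stein ?_ ?_ ?_) <;>
    simp only [Matrix.mul_sub, Matrix.sub_mul]
  · exact sub_eq_sub_iff_sub_eq_sub.mp hA
  · exact sub_eq_zero.mpr hAC
  · exact sub_eq_zero.mpr hCC

end Observable

theorem Reachable.observable_transpose {N M : Type*} [Fintype N] [DecidableEq N] [Fintype M]
    {A : Matrix N N ℝ} {B : Matrix N M ℝ} (hreach : Reachable A B) : Observable Aᵀ Bᵀ := by
  intro v hv
  have hspan : Submodule.span ℝ
      {v : N → ℝ | ∃ k < Fintype.card N, ∃ j : M, v = (A ^ k) *ᵥ (fun i => B i j)} ≤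
      LinearMap.ker ((dotProductBilin ℝ ℝ).flip v) := by
    rw [Submodule.span_le]
    rintro _ ⟨k, hk, j, rfl⟩
    have hvk := congrFun (hv k hk) j
    rw [← transpose_pow, ← transpose_mul, mulVec_transpose, ← vecMul_vecMul] at hvk
    rw [SetLike.mem_coe, LinearMap.mem_ker, LinearMap.flip_apply, dotProductBilin_apply_apply,
      dotProduct_comm, dotProduct_mulVec]
    exact hvk
  rw [hreach] at hspan
  exact dotProduct_self_eq_zero.mp (hspan Submodule.mem_top)

theorem allpass_P_Q_unique_general
    (n m : ℕ) (A : Matrix (Fin n) (Fin n) ℝ) (B : Matrix (Fin n) (Fin m) ℝ)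
    (C : Matrix (Fin m) (Fin n) ℝ) (D : Matrix (Fin m) (Fin m) ℝ)
    (hreach : Reachable A B) (hobs : Observable A C) :
    (∀ P₁ P₂ : Matrix (Fin n) (Fin n) ℝ,
      (A * P₁ * Aᵀ - P₁ = B * Bᵀ ∧ B * Dᵀ = A * P₁ * Cᵀ ∧ D * Dᵀ - C * P₁ * Cᵀ = 1) →
      (A * P₂ * Aᵀ - P₂ = B * Bᵀ ∧ B * Dᵀ = A * P₂ * Cᵀ ∧ D * Dᵀ - C * P₂ * Cᵀ = 1) →
      P₁ = P₂) ∧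
    (∀ Q₁ Q₂ : Matrix (Fin n) (Fin n) ℝ,
      (Aᵀ * Q₁ * A - Q₁ = Cᵀ * C ∧ Cᵀ * D = Aᵀ * Q₁ * B ∧ Dᵀ * D - Bᵀ * Q₁ * B = 1) →
      (Aᵀ * Q₂ * A - Q₂ = Cᵀ * C ∧ Cᵀ * D = Aᵀ * Q₂ * B ∧ Dᵀ * D - Bᵀ * Q₂ * B = 1) →
      Q₁ = Q₂) := by
  refine ⟨fun P₁ P₂ ⟨hP₁, hAP₁, hCP₁⟩ ⟨hP₂, hAP₂, hCP₂⟩ => ?_,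
    fun Q₁ Q₂ ⟨hQ₁, hAQ₁, hBQ₁⟩ ⟨hQ₂, hAQ₂, hBQ₂⟩ => ?_⟩
  · exact hobs.eq_of_stein (hP₁.trans hP₂.symm) (hAP₁.symm.trans hAP₂)
      (sub_right_injective (hCP₁.trans hCP₂.symm))
  · have hdual := hreach.observable_transpose.eq_of_stein (P₁ := Q₁) (P₂ := Q₂)
    simp only [transpose_transpose] at hdual
    exact hdual (hQ₁.trans hQ₂.symm) (hAQ₁.symm.trans hAQ₂)
      (sub_right_injective (hBQ₁.trans hBQ₂.symm))

theorem allpass_P_Q_unique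
    (n m : ℕ) (A : Matrix (Fin n) (Fin n) ℝ) (B : Matrix (Fin n) (Fin m) ℝ)
    (C : Matrix (Fin m) (Fin n) ℝ) (D : Matrix (Fin m) (Fin m) ℝ)
    (hreach : Reachable A B) (hobs : Observable A C) (hap : AllPass A B C D) :
    (∀ P₁ P₂ : Matrix (Fin n) (Fin n) ℝ,
      (A * P₁ * Aᵀ - P₁ = B * Bᵀ ∧ B * Dᵀ = A * P₁ * Cᵀ ∧ D * Dᵀ - C * P₁ * Cᵀ = 1) →
      (A * P₂ * Aᵀ - P₂ = B * Bᵀ ∧ B * Dᵀ = A * P₂ * Cᵀ ∧ D * Dᵀ - C * P₂ * Cᵀ = 1) →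
      P₁ = P₂) ∧
    (∀ Q₁ Q₂ : Matrix (Fin n) (Fin n) ℝ,
      (Aᵀ * Q₁ * A - Q₁ = Cᵀ * C ∧ Cᵀ * D = Aᵀ * Q₁ * B ∧ Dᵀ * D - Bᵀ * Q₁ * B = 1) →
      (Aᵀ * Q₂ * A - Q₂ = Cᵀ * C ∧ Cᵀ * D = Aᵀ * Q₂ * B ∧ Dᵀ * D - Bᵀ * Q₂ * B = 1) →
      Q₁ = Q₂) :=
  allpass_P_Q_unique_general n m A B C D hreach hobs
end
end

section
/- Let A ∈ ℝ^{n×n}, B ∈ ℝ^{n×m}, C ∈ ℝ^{m×n}, D ∈ ℝ^{m×m} be arbitrary (no reachability or observability is assumed). If there exists a symmetric matrix P ∈ ℝ^{n×n} satisfying A P Aᵀ − P = B Bᵀ, B Dᵀ = A P Cᵀ, and D Dᵀ − C P Cᵀ = I, then the transfer function Q(z) = C(zI−A)⁻¹B + D is all-pass. -/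
open Matrix

noncomputable section

/-!
With `F = z • 1 - A` and `G = z⁻¹ • 1 - Aᵀ`, the Stein equation `A P Aᵀ - P = B Bᵀ` reads
`B Bᵀ = -(F P G + F P Aᵀ + A P G)`. In `Q(z) Q(z⁻¹)ᵀ` the term `C F⁻¹ B Bᵀ G⁻¹ Cᵀ` therefore
splits as `-C P Cᵀ - C P Aᵀ G⁻¹ Cᵀ - C F⁻¹ A P Cᵀ`, and the cross terms `C F⁻¹ B Dᵀ` and
`D Bᵀ G⁻¹ Cᵀ` cancel the last two because `B Dᵀ = A P Cᵀ`. What remains is `D Dᵀ - C P Cᵀ = 1`.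
-/

theorem mul_mul_sub_eq_neg_resolvent_sum {K R : Type*} [Field K] [Ring R] [Algebra K R]
    {z : K} (hz : z ≠ 0) (a p x : R) :
    a * p * x - p = -((z • 1 - a) * p * (z⁻¹ • 1 - x) + (z • 1 - a) * p * x
      + a * p * (z⁻¹ • 1 - x)) := by
  simp only [sub_mul, mul_sub, smul_mul_assoc, mul_smul_comm, one_mul, mul_one, smul_sub,
    smul_smul, inv_mul_cancel₀ hz, one_smul]
  abel

namespace Matrix

variable {K N M : Type*} [CommRing K] [Fintype N] [Fintype M]

theorem mul_transpose_eq_of_transpose_mul_eq {L : Type*} {A P : Matrix N N K}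
    {B : Matrix N M K} {C : Matrix L N K} {D : Matrix L M K} (hP : P.IsSymm)
    (h : B * Dᵀ = A * P * Cᵀ) :
    D * Bᵀ = C * P * Aᵀ := by
  simpa [transpose_mul, hP.eq, Matrix.mul_assoc] using congrArg transpose h

theorem transfer_mul_dual_transfer_eq [DecidableEq N] {A F G P : Matrix N N K}
    {B : Matrix N M K} {C : Matrix M N K} {D : Matrix M M K} (hF : IsUnit F.det) (hG : IsUnit G.det)
    (hBB : B * Bᵀ = -(F * P * G + F * P * Aᵀ + A * P * G))
    (hBD : B * Dᵀ = A * P * Cᵀ) (hDB : D * Bᵀ = C * P * Aᵀ) :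
    (C * F⁻¹ * B + D) * (Bᵀ * G⁻¹ * Cᵀ + Dᵀ) = D * Dᵀ - C * P * Cᵀ := by
  calc (C * F⁻¹ * B + D) * (Bᵀ * G⁻¹ * Cᵀ + Dᵀ)
      = C * F⁻¹ * (B * Bᵀ) * G⁻¹ * Cᵀ + C * F⁻¹ * (B * Dᵀ) + D * Bᵀ * G⁻¹ * Cᵀ
        + D * Dᵀ := by
        simp only [Matrix.add_mul, Matrix.mul_add, Matrix.mul_assoc]; abel
    _ = D * Dᵀ - C * P * Cᵀ := by
        rw [hBB, hBD, hDB]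
        simp only [Matrix.add_mul, Matrix.mul_add, Matrix.neg_mul, Matrix.mul_neg,
          Matrix.mul_assoc, nonsing_inv_mul_cancel_left _ _ hF,
          mul_nonsing_inv_cancel_left _ _ hG]
        abel

end Matrix

theorem eqsP_implies_allpass
    (n m : ℕ) (A : Matrix (Fin n) (Fin n) ℝ) (B : Matrix (Fin n) (Fin m) ℝ)
    (C : Matrix (Fin m) (Fin n) ℝ) (D : Matrix (Fin m) (Fin m) ℝ)
    (P : Matrix (Fin n) (Fin n) ℝ) (hPsymm : P.IsSymm)
    (h1 : A * P * Aᵀ - P = B * Bᵀ) (h2 : B * Dᵀ = A * P * Cᵀ)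
    (h3 : D * Dᵀ - C * P * Cᵀ = 1) :
    AllPass A B C D := by
  intro z hz hF hG
  rw [← h3]
  refine transfer_mul_dual_transfer_eq ((isUnit_iff_isUnit_det _).mp hF)
    ((isUnit_iff_isUnit_det _).mp hG) ?_ h2 (mul_transpose_eq_of_transpose_mul_eq hPsymm h2)
  rw [← h1]
  exact mul_mul_sub_eq_neg_resolvent_sum hz A P Aᵀ
end
end

section
/- Let A ∈ ℝ^{n×n}, B ∈ ℝ^{n×m}, C ∈ ℝ^{m×n}, D ∈ ℝ^{m×m} be arbitrary (no reachability or observability is assumed). If there exists a symmetric matrix Q ∈ ℝ^{n×n} satisfying Aᵀ Q A − Q = Cᵀ C, Cᵀ D = Aᵀ Q B, and Dᵀ D − Bᵀ Q B = I, then the transfer function Q(z) = C(zI−A)⁻¹B + D is all-pass. -/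
open Matrix

noncomputable section

/-! Write `F = zI − A` and `G = z⁻¹I − Aᵀ`. The Stein equation splits
`CᵀC = AᵀQA − Q = −AᵀQ F − z G Q`, so `G⁻¹ CᵀC F⁻¹ = −G⁻¹AᵀQ − z Q F⁻¹`. In the expansion of the
reversed product `(BᵀG⁻¹Cᵀ + Dᵀ)(CF⁻¹B + D)`, the cross terms become `BᵀG⁻¹AᵀQB` (by `CᵀD = AᵀQB`)
and `BᵀQAF⁻¹B = z BᵀQF⁻¹B − BᵀQB` (by `DᵀC = BᵀQA`, which needs `Q` symmetric), so every resolvent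
term cancels and `DᵀD − BᵀQB = I` remains. For square matrices a one-sided inverse is two-sided. -/

namespace Matrix

variable {K ι : Type*} [Field K] [Fintype ι] [DecidableEq ι]

theorem mul_inv_smul_one_sub_self {z : K} {A : Matrix ι ι K} (h : IsUnit (z • 1 - A)) :
    A * (z • 1 - A)⁻¹ = z • (z • 1 - A)⁻¹ - 1 := by
  have hinv := mul_nonsing_inv _ ((isUnit_iff_isUnit_det _).mp h)
  calc A * (z • 1 - A)⁻¹ = (z • 1 - (z • 1 - A)) * (z • 1 - A)⁻¹ := by rw [sub_sub_cancel]
    _ = z • (z • 1 - A)⁻¹ - 1 := by rw [sub_mul, hinv, smul_mul, one_mul]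

theorem transpose_mul_mul_self_sub_eq {z : K} (hz : z ≠ 0) (A Q : Matrix ι ι K) :
    Aᵀ * Q * A - Q = -(Aᵀ * Q * (z • 1 - A)) - z • ((z⁻¹ • 1 - Aᵀ) * Q) := by
  simp only [mul_sub, sub_mul, Matrix.mul_smul, Matrix.smul_mul, smul_sub, smul_smul, mul_one,
    one_mul, mul_inv_cancel₀ hz, one_smul]
  abel

theorem inv_mul_stein_mul_inv {z : K} (hz : z ≠ 0) {A : Matrix ι ι K} (Q : Matrix ι ι K)
    (hF : IsUnit (z • 1 - A)) (hG : IsUnit (z⁻¹ • 1 - Aᵀ)) :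
    (z⁻¹ • 1 - Aᵀ)⁻¹ * (Aᵀ * Q * A - Q) * (z • 1 - A)⁻¹ =
      -((z⁻¹ • 1 - Aᵀ)⁻¹ * Aᵀ * Q) - z • (Q * (z • 1 - A)⁻¹) := by
  have hFF := mul_nonsing_inv _ ((isUnit_iff_isUnit_det _).mp hF)
  have hGG := nonsing_inv_mul _ ((isUnit_iff_isUnit_det _).mp hG)
  rw [transpose_mul_mul_self_sub_eq hz, mul_sub, sub_mul, mul_neg, neg_mul, Matrix.mul_smul,
    Matrix.smul_mul]
  simp only [Matrix.mul_assoc]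
  rw [hFF, mul_one, ← Matrix.mul_assoc _ (z⁻¹ • 1 - Aᵀ), hGG, one_mul]

end Matrix

theorem eqsQ_implies_allpass
    (n m : ℕ) (A : Matrix (Fin n) (Fin n) ℝ) (B : Matrix (Fin n) (Fin m) ℝ)
    (C : Matrix (Fin m) (Fin n) ℝ) (D : Matrix (Fin m) (Fin m) ℝ)
    (Q : Matrix (Fin n) (Fin n) ℝ) (hQsymm : Q.IsSymm)
    (h1 : Aᵀ * Q * A - Q = Cᵀ * C) (h2 : Cᵀ * D = Aᵀ * Q * B)
    (h3 : Dᵀ * D - Bᵀ * Q * B = 1) :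
    AllPass A B C D := by
  intro z hz hF hG
  set F := z • (1 : Matrix (Fin n) (Fin n) ℝ) - A
  set G := z⁻¹ • (1 : Matrix (Fin n) (Fin n) ℝ) - Aᵀ
  have hCC : G⁻¹ * (Cᵀ * C) * F⁻¹ = -(G⁻¹ * Aᵀ * Q) - z • (Q * F⁻¹) := by
    rw [← h1]; exact inv_mul_stein_mul_inv hz Q hF hG
  have hDC : Dᵀ * C = Bᵀ * Q * A := by
    simpa [transpose_mul, Matrix.mul_assoc, hQsymm.eq] using congrArg transpose h2
  rw [mul_eq_one_comm]
  calc (Bᵀ * G⁻¹ * Cᵀ + Dᵀ) * (C * F⁻¹ * B + D)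
      = Bᵀ * (G⁻¹ * (Cᵀ * C) * F⁻¹) * B + Bᵀ * G⁻¹ * (Cᵀ * D)
          + Dᵀ * C * F⁻¹ * B + Dᵀ * D := by
        simp only [Matrix.add_mul, Matrix.mul_add, Matrix.mul_assoc]; abel
    _ = Dᵀ * D - Bᵀ * Q * B := by
        rw [hCC, h2, hDC, Matrix.mul_assoc (Bᵀ * Q) A, mul_inv_smul_one_sub_self hF]
        simp only [Matrix.mul_sub, Matrix.sub_mul, Matrix.mul_neg, Matrix.neg_mul, Matrix.mul_smul,
          Matrix.smul_mul, Matrix.mul_one, Matrix.mul_assoc]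
        abel
    _ = 1 := h3
end
end

section
/- Let A ∈ ℝ^{n×n}, B ∈ ℝ^{n×m}, C ∈ ℝ^{m×n}, D ∈ ℝ^{m×m} and let P ∈ ℝ^{n×n} be symmetric and invertible. Then P satisfies equations (P): A P Aᵀ − P = B Bᵀ, B Dᵀ = A P Cᵀ, D Dᵀ − C P Cᵀ = I, if and only if P⁻¹ satisfies equations (Q): Aᵀ (P⁻¹) A − P⁻¹ = Cᵀ C, Cᵀ D = Aᵀ (P⁻¹) B, Dᵀ D − Bᵀ (P⁻¹) B = I. -/
/-! With `M = [[A, B], [C, D]]` and `J = diag(P, -I)`, equations (P) say `M J Mᵀ = J` (the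
lower-left block is the transpose of the upper-right one because `P` is symmetric), and
equations (Q) for `P⁻¹` say `Mᵀ J⁻¹ M = J⁻¹`, which is the same block identity for the
transposed quadruple. For square matrices and invertible `J`, `M J N = J` makes `J N J⁻¹` a
right, hence a left, inverse of `M`, i.e. `N J⁻¹ M = J⁻¹`; the converse is the same argument
with `J⁻¹` in place of `J`. -/

open Matrix

noncomputable section

namespace Matrix

section Congruence

variable {ι R : Type*} [Fintype ι] [DecidableEq ι] [CommRing R]

theorem mul_inv_mul_eq_inv_of_mul_mul_eq {J : Matrix ι ι R} (hJ : IsUnit J)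
    {M N : Matrix ι ι R} (h : M * J * N = J) : N * J⁻¹ * M = J⁻¹ := by
  have hJdet : IsUnit J.det := (isUnit_iff_isUnit_det J).mp hJ
  have hright : M * (J * N * J⁻¹) = 1 := by
    rw [← Matrix.mul_assoc, ← Matrix.mul_assoc, h, mul_nonsing_inv J hJdet]
  calc N * J⁻¹ * M = J⁻¹ * (J * N * J⁻¹ * M) := by
        rw [← Matrix.mul_assoc, ← Matrix.mul_assoc, ← Matrix.mul_assoc,
          nonsing_inv_mul J hJdet, Matrix.one_mul]
    _ = J⁻¹ := by rw [mul_eq_one_comm.mp hright, Matrix.mul_one]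

theorem mul_mul_eq_iff_mul_inv_mul_eq_inv {J : Matrix ι ι R} (hJ : IsUnit J)
    (M N : Matrix ι ι R) : M * J * N = J ↔ N * J⁻¹ * M = J⁻¹ := by
  refine ⟨mul_inv_mul_eq_inv_of_mul_mul_eq hJ, fun h => ?_⟩
  rw [← nonsing_inv_nonsing_inv J ((isUnit_iff_isUnit_det J).mp hJ)]
  exact mul_inv_mul_eq_inv_of_mul_mul_eq (isUnit_nonsing_inv_iff.mpr hJ) h

end Congruence

section Blocks

variable {N M R : Type*} [Fintype N] [Fintype M] [DecidableEq M] [CommRing R]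

theorem fromBlocks_mul_fromBlocks_mul_transpose_eq_iff {A : Matrix N N R} {B : Matrix N M R}
    {C : Matrix M N R} {D : Matrix M M R} {P : Matrix N N R} (hP : P.IsSymm) :
    fromBlocks A B C D * fromBlocks P 0 0 (-1) * (fromBlocks A B C D)ᵀ = fromBlocks P 0 0 (-1) ↔
      A * P * Aᵀ - P = B * Bᵀ ∧ B * Dᵀ = A * P * Cᵀ ∧ D * Dᵀ - C * P * Cᵀ = 1 := by
  simp only [fromBlocks_transpose, fromBlocks_multiply, fromBlocks_inj, Matrix.mul_zero,
    add_zero, zero_add, Matrix.mul_neg, Matrix.mul_one, Matrix.neg_mul]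
  simp only [← sub_eq_add_neg]
  have hlower : C * P * Aᵀ - D * Bᵀ = (A * P * Cᵀ - B * Dᵀ)ᵀ := by
    simp only [transpose_sub, transpose_mul, transpose_transpose, hP.eq, Matrix.mul_assoc]
  rw [hlower, transpose_eq_zero, sub_eq_iff_comm, sub_eq_zero, eq_comm (a := A * P * Cᵀ),
    ← neg_sub (D * Dᵀ), neg_inj]
  simp only [and_self_left]

theorem inv_fromBlocks_zero_zero_neg_one [DecidableEq N] {P : Matrix N N R} (hP : IsUnit P) :
    (fromBlocks P 0 0 (-1 : Matrix M M R))⁻¹ = fromBlocks P⁻¹ 0 0 (-1) := by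
  have hneg : IsUnit (-1 : Matrix M M R) := isUnit_one.neg
  rw [inv_fromBlocks_zero₂₁_of_isUnit_iff _ _ _ (iff_of_true hP hneg)]
  simp [inv_eq_left_inv (show (-1 : Matrix M M R) * -1 = 1 by simp)]

end Blocks

end Matrix

theorem eqsP_iff_eqsQ_inverse
    (n m : ℕ) (A : Matrix (Fin n) (Fin n) ℝ) (B : Matrix (Fin n) (Fin m) ℝ)
    (C : Matrix (Fin m) (Fin n) ℝ) (D : Matrix (Fin m) (Fin m) ℝ)
    (P : Matrix (Fin n) (Fin n) ℝ) (hPsymm : P.IsSymm) (hPinv : IsUnit P) :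
    (A * P * Aᵀ - P = B * Bᵀ ∧ B * Dᵀ = A * P * Cᵀ ∧ D * Dᵀ - C * P * Cᵀ = 1) ↔
    (Aᵀ * P⁻¹ * A - P⁻¹ = Cᵀ * C ∧ Cᵀ * D = Aᵀ * P⁻¹ * B ∧
      Dᵀ * D - Bᵀ * P⁻¹ * B = 1) := by
  have hJ : IsUnit (fromBlocks P 0 0 (-1 : Matrix (Fin m) (Fin m) ℝ)) :=
    isUnit_fromBlocks_zero₂₁.mpr ⟨hPinv, isUnit_one.neg⟩
  have hQ := fromBlocks_mul_fromBlocks_mul_transpose_eq_iff (A := Aᵀ) (B := Cᵀ) (C := Bᵀ)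
    (D := Dᵀ) hPsymm.inv
  rw [← fromBlocks_transpose, transpose_transpose] at hQ
  rw [← fromBlocks_mul_fromBlocks_mul_transpose_eq_iff hPsymm,
    mul_mul_eq_iff_mul_inv_mul_eq_inv hJ, inv_fromBlocks_zero_zero_neg_one hPinv, hQ]
  simp only [transpose_transpose]
end
end

section
/- Let A ∈ ℝ^{n×n}, B ∈ ℝ^{n×m}, C ∈ ℝ^{m×n} be given. (i) If P ∈ ℝ^{n×n} is symmetric, G ∈ ℝ^{n×m}, L ∈ ℝ^{m×m} and M(P) = [[A P Aᵀ − P, A P Cᵀ],[C P Aᵀ, C P Cᵀ + I]] equals the block matrix [[G Gᵀ, G Lᵀ],[L Gᵀ, L Lᵀ]], then the transfer function Q_L(z) = C(zI−A)⁻¹G + L is all-pass. (ii) Dually, if Q ∈ ℝ^{n×n} is symmetric, H ∈ ℝ^{m×n}, J ∈ ℝ^{m×m} and N(Q) = [[Aᵀ Q A − Q, Aᵀ Q B],[Bᵀ Q A, Bᵀ Q B + I]] equals [[Hᵀ H, Hᵀ J],[Jᵀ H, Jᵀ J]], then the transfer function Q_R(z) = H(zI−A)⁻¹B + J is all-pass.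 -/
open Matrix

noncomputable section

/-! Writing `X = z I - A` and `Y = z⁻¹ I - Aᵀ`, the hypothesis `M(P) = [G; L] [G; L]ᵀ` turns
`Q_L(z) Q_L(z⁻¹)ᵀ` into `C (X⁻¹ (A P Aᵀ - P) Y⁻¹ + X⁻¹ A P + P Aᵀ Y⁻¹ + P) Cᵀ + I`,
and the bracket vanishes because multiplying it by `X` on the left and by `Y` on the right
gives `0` identically. Part (ii) is part (i) for the transposed system `(Aᵀ, Hᵀ, Bᵀ, Jᵀ)`
evaluated at `z⁻¹`. -/

section Resolvent

variable {K N : Type*} [Field K] [Fintype N] [DecidableEq N]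

theorem resolvent_lyapunov_identity (A B P : Matrix N N K) {z : K} (hz : z ≠ 0)
    (hX : IsUnit (z • 1 - A)) (hY : IsUnit (z⁻¹ • 1 - B)) :
    (z • 1 - A)⁻¹ * (A * P * B - P) * (z⁻¹ • 1 - B)⁻¹ + (z • 1 - A)⁻¹ * A * P
      + P * B * (z⁻¹ • 1 - B)⁻¹ + P = 0 := by
  have hsandwich : (A * P * B - P) + A * P * (z⁻¹ • 1 - B) + (z • 1 - A) * P * B
      + (z • 1 - A) * P * (z⁻¹ • 1 - B) = 0 := by
    noncomm_ring
    simp [hz]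
  set X := z • (1 : Matrix N N K) - A
  set Y := z⁻¹ • (1 : Matrix N N K) - B
  have hXX : X⁻¹ * X = 1 := nonsing_inv_mul X ((isUnit_iff_isUnit_det X).mp hX)
  have hYY : Y * Y⁻¹ = 1 := mul_nonsing_inv Y ((isUnit_iff_isUnit_det Y).mp hY)
  calc _ = X⁻¹ * ((A * P * B - P) + A * P * Y + X * P * B + X * P * Y) * Y⁻¹ := by
          simp only [mul_add, add_mul, ← mul_assoc, hXX, one_mul]
          simp only [mul_assoc, hYY, mul_one]
    _ = 0 := by rw [hsandwich, mul_zero, zero_mul]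

end Resolvent

section AllPass

variable {N M : Type*} [Fintype N] [DecidableEq N] [Fintype M] [DecidableEq M]

theorem allPass_of_lyapunov_factor (A : Matrix N N ℝ) (C : Matrix M N ℝ) (P : Matrix N N ℝ)
    (G : Matrix N M ℝ) (L : Matrix M M ℝ)
    (h₁₁ : A * P * Aᵀ - P = G * Gᵀ) (h₁₂ : A * P * Cᵀ = G * Lᵀ)
    (h₂₁ : C * P * Aᵀ = L * Gᵀ) (h₂₂ : C * P * Cᵀ + 1 = L * Lᵀ) :
    AllPass A G C L := by
  intro z hz hX hY
  set U := (z • (1 : Matrix N N ℝ) - A)⁻¹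
  set V := (z⁻¹ • (1 : Matrix N N ℝ) - Aᵀ)⁻¹
  calc (C * U * G + L) * (Gᵀ * V * Cᵀ + Lᵀ)
      = C * U * (G * Gᵀ) * V * Cᵀ + C * U * (G * Lᵀ) + L * Gᵀ * V * Cᵀ + L * Lᵀ := by
        simp only [Matrix.add_mul, Matrix.mul_add, Matrix.mul_assoc]
        abel
    _ = C * (U * (A * P * Aᵀ - P) * V + U * A * P + P * Aᵀ * V + P) * Cᵀ + 1 := by
        rw [← h₁₁, ← h₁₂, ← h₂₁, ← h₂₂]
        simp only [Matrix.sub_mul, Matrix.mul_sub, Matrix.add_mul, Matrix.mul_add, Matrix.mul_assoc]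
        abel
    _ = 1 := by
        rw [resolvent_lyapunov_identity A Aᵀ P hz hX hY, Matrix.mul_zero, Matrix.zero_mul, zero_add]

theorem AllPass.of_transpose {A : Matrix N N ℝ} {B : Matrix N M ℝ} {C : Matrix M N ℝ}
    {D : Matrix M M ℝ} (h : AllPass Aᵀ Cᵀ Bᵀ Dᵀ) : AllPass A B C D := by
  intro z hz hX hY
  have h' := h z⁻¹ (inv_ne_zero hz) hY (by simpa only [inv_inv, transpose_transpose] using hX)
  simp only [inv_inv, transpose_transpose] at h'
  exact mul_eq_one_comm.mp h'

end AllPass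

theorem LMI_factor_allpass
    (n m : ℕ) (A : Matrix (Fin n) (Fin n) ℝ) (B : Matrix (Fin n) (Fin m) ℝ)
    (C : Matrix (Fin m) (Fin n) ℝ) :
    (∀ (P : Matrix (Fin n) (Fin n) ℝ), P.IsSymm →
      ∀ (G : Matrix (Fin n) (Fin m) ℝ) (L : Matrix (Fin m) (Fin m) ℝ),
        Matrix.fromBlocks (A * P * Aᵀ - P) (A * P * Cᵀ) (C * P * Aᵀ) (C * P * Cᵀ + 1) =
          Matrix.fromBlocks (G * Gᵀ) (G * Lᵀ) (L * Gᵀ) (L * Lᵀ) →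
        AllPass A G C L) ∧
    (∀ (Q : Matrix (Fin n) (Fin n) ℝ), Q.IsSymm →
      ∀ (H : Matrix (Fin m) (Fin n) ℝ) (J : Matrix (Fin m) (Fin m) ℝ),
        Matrix.fromBlocks (Aᵀ * Q * A - Q) (Aᵀ * Q * B) (Bᵀ * Q * A) (Bᵀ * Q * B + 1) =
          Matrix.fromBlocks (Hᵀ * H) (Hᵀ * J) (Jᵀ * H) (Jᵀ * J) →
        AllPass A B H J) := by
  refine ⟨fun P _ G L h => ?_, fun Q _ H J h => ?_⟩
  · obtain ⟨h₁₁, h₁₂, h₂₁, h₂₂⟩ := fromBlocks_inj.mp h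
    exact allPass_of_lyapunov_factor A C P G L h₁₁ h₁₂ h₂₁ h₂₂
  · obtain ⟨h₁₁, h₁₂, h₂₁, h₂₂⟩ := fromBlocks_inj.mp h
    refine AllPass.of_transpose (allPass_of_lyapunov_factor Aᵀ Bᵀ Q Hᵀ Jᵀ ?_ ?_ ?_ ?_) <;>
      simpa only [transpose_transpose]
end
end

section
/- Let A ∈ ℝ^{n×n}, C ∈ ℝ^{m×n}, and let P ∈ ℝ^{n×n} be a symmetric matrix such that M(P) = [[A P Aᵀ − P, A P Cᵀ],[C P Aᵀ, C P Cᵀ + I]] is positive semidefinite with rank M(P) = m. Then the kernel of P is Aᵀ-invariant, i.e., Aᵀ(ker P) ⊆ ker P. -/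
open Matrix

noncomputable section

/-!
With `G = [A; C]` and `J = diag(P, -I)` one has `M(P) = G (P Gᵀ) - J`, so every vector killed by
both `P Gᵀ` and `M(P)` is killed by `J`. Counting dimensions, `rank (P Gᵀ) + rank M(P) ≤ rank P + m`
forces `ker (P Gᵀ) ⊓ ker M(P)` to be all of `ker J = ker P × 0`. Hence `P Gᵀ (v, 0) = P Aᵀ v`
vanishes for every `v ∈ ker P`.
-/

open Module

theorem Submodule.inf_eq_of_inf_le_of_finrank_add_le {K V : Type*} [DivisionRing K]
    [AddCommGroup V] [Module K V] [FiniteDimensional K V] {U W L : Submodule K V}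
    (h : U ⊓ W ≤ L) (hdim : finrank K L + finrank K V ≤ finrank K U + finrank K W) :
    U ⊓ W = L := by
  refine Submodule.eq_of_le_of_finrank_le h ?_
  have := Submodule.finrank_sup_add_finrank_inf_eq U W
  have := (U ⊔ W).finrank_le
  omega

namespace Matrix

section Field

variable {K l p r : Type*} [Field K] [Fintype l]

theorem rank_add_finrank_ker_mulVecLin (X : Matrix p l K) :
    X.rank + finrank K (LinearMap.ker X.mulVecLin) = Fintype.card l := by
  rw [← finrank_fintype_fun_eq_card K]
  exact LinearMap.finrank_range_add_finrank_ker X.mulVecLin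

theorem ker_mulVecLin_le_of_eq_mul_sub [Fintype p] {G : Matrix r p K} {X : Matrix p l K}
    {M J : Matrix r l K} (hM : M = G * X - J)
    (hdim : finrank K (LinearMap.ker J.mulVecLin) + X.rank + M.rank ≤ Fintype.card l) :
    LinearMap.ker J.mulVecLin ≤ LinearMap.ker X.mulVecLin := by
  have hinf : LinearMap.ker X.mulVecLin ⊓ LinearMap.ker M.mulVecLin ≤
      LinearMap.ker J.mulVecLin := by
    rintro y ⟨hXy, hMy⟩
    simp only [SetLike.mem_coe, LinearMap.mem_ker, mulVecLin_apply] at hXy hMy ⊢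
    rwa [hM, sub_mulVec, ← mulVec_mulVec, hXy, mulVec_zero, zero_sub, neg_eq_zero] at hMy
  rw [← Submodule.inf_eq_of_inf_le_of_finrank_add_le hinf]
  · exact inf_le_left
  · have := X.rank_add_finrank_ker_mulVecLin
    have := M.rank_add_finrank_ker_mulVecLin
    rw [finrank_fintype_fun_eq_card]
    omega

end Field

variable {α n m : Type*} [Ring α] [Fintype n] [DecidableEq m]

theorem fromRows_mul_mul_transpose_sub [DecidableEq n] (A : Matrix n n α) (C : Matrix m n α)
    (P : Matrix n n α) :
    fromBlocks (A * P * Aᵀ - P) (A * P * Cᵀ) (C * P * Aᵀ) (C * P * Cᵀ + 1) =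
      fromRows A C * (P * (fromRows A C)ᵀ) - fromBlocks P 0 0 (-1) := by
  rw [transpose_fromRows, mul_fromCols, fromRows_mul_fromCols,
    sub_eq_add_neg _ (fromBlocks _ _ _ _), fromBlocks_neg, fromBlocks_add]
  simp [Matrix.mul_assoc, sub_eq_add_neg]

variable [Fintype m]

theorem fromBlocks_neg_one_mulVec_eq_zero_iff (P : Matrix n n α) {y : n ⊕ m → α} :
    fromBlocks P 0 0 (-1 : Matrix m m α) *ᵥ y = 0 ↔
      P *ᵥ (y ∘ Sum.inl) = 0 ∧ y ∘ Sum.inr = 0 := by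
  rw [fromBlocks_mulVec, ← Sum.elim_zero_zero]
  simp [funext_iff, neg_mulVec]

theorem finrank_ker_fromBlocks_neg_one_le {K : Type*} [Field K] (P : Matrix n n K) :
    finrank K (LinearMap.ker (fromBlocks P 0 0 (-1 : Matrix m m K)).mulVecLin) ≤
      finrank K (LinearMap.ker P.mulVecLin) := by
  let extendByZero : (n → K) →ₗ[K] (n ⊕ m → K) :=
    (LinearEquiv.sumArrowLequivProdArrow n m K K).symm.toLinearMap ∘ₗ LinearMap.inl K _ _
  refine (Submodule.finrank_mono ?_).trans (Submodule.finrank_map_le extendByZero _)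
  intro y hy
  rw [LinearMap.mem_ker, mulVecLin_apply, fromBlocks_neg_one_mulVec_eq_zero_iff] at hy
  refine ⟨y ∘ Sum.inl, hy.1, ?_⟩
  ext (i | i)
  · rfl
  · exact (congrFun hy.2 i).symm

end Matrix

theorem ker_P_Atranspose_invariant_general
    (n m : ℕ) (A : Matrix (Fin n) (Fin n) ℝ) (C : Matrix (Fin m) (Fin n) ℝ)
    (P : Matrix (Fin n) (Fin n) ℝ)
    (hrank : (Matrix.fromBlocks (A * P * Aᵀ - P) (A * P * Cᵀ)
      (C * P * Aᵀ) (C * P * Cᵀ + 1)).rank = m) :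
    ∀ v : Fin n → ℝ, P *ᵥ v = 0 → P *ᵥ (Aᵀ *ᵥ v) = 0 := by
  intro v hv
  have hJ := finrank_ker_fromBlocks_neg_one_le (m := Fin m) P
  have hP : P.rank + _ = n := (P.rank_add_finrank_ker_mulVecLin).trans (Fintype.card_fin n)
  have hX := rank_mul_le_left P (fromRows A C)ᵀ
  have hker := ker_mulVecLin_le_of_eq_mul_sub (fromRows_mul_mul_transpose_sub A C P) (by
    rw [hrank, Fintype.card_sum, Fintype.card_fin, Fintype.card_fin]
    omega)
  have hvJ : Sum.elim v 0 ∈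
      LinearMap.ker (fromBlocks P 0 0 (-1 : Matrix (Fin m) (Fin m) ℝ)).mulVecLin := by
    rw [LinearMap.mem_ker, mulVecLin_apply, fromBlocks_neg_one_mulVec_eq_zero_iff]
    exact ⟨hv, Sum.elim_comp_inr _ _⟩
  have hPG : (P * (fromRows A C)ᵀ) *ᵥ Sum.elim v 0 = 0 := hker hvJ
  rwa [← mulVec_mulVec, transpose_fromRows, fromCols_mulVec_sumElim, mulVec_zero, add_zero] at hPG

theorem ker_P_Atranspose_invariant
    (n m : ℕ) (A : Matrix (Fin n) (Fin n) ℝ) (C : Matrix (Fin m) (Fin n) ℝ)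
    (P : Matrix (Fin n) (Fin n) ℝ) (hPsymm : P.IsSymm)
    (hpsd : (Matrix.fromBlocks (A * P * Aᵀ - P) (A * P * Cᵀ)
      (C * P * Aᵀ) (C * P * Cᵀ + 1)).PosSemidef)
    (hrank : (Matrix.fromBlocks (A * P * Aᵀ - P) (A * P * Cᵀ)
      (C * P * Aᵀ) (C * P * Cᵀ + 1)).rank = m) :
    ∀ v : Fin n → ℝ, P *ᵥ v = 0 → P *ᵥ (Aᵀ *ᵥ v) = 0 :=
  ker_P_Atranspose_invariant_general n m A C P hrank
end
end

section
/- Let A ∈ ℝ^{n×n}, B ∈ ℝ^{n×m}, and let Q ∈ ℝ^{n×n} be a symmetric matrix such that N(Q) = [[Aᵀ Q A − Q, Aᵀ Q B],[Bᵀ Q A, Bᵀ Q B + I]] is positive semidefinite with rank N(Q) = m. Then the kernel of Q is A-invariant, i.e., A(ker Q) ⊆ ker Q. -/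
open Matrix

noncomputable section

/-!
For `z = (x, u)` in the kernel of `N(Q)` one has `AᵀQ(Ax + Bu) = Qx` and `BᵀQ(Ax + Bu) = -u`.
Hence `z ↦ x` embeds `{z ∈ ker N(Q) | Q(Ax + Bu) = 0}` into `ker Q`, and since
`dim ker N(Q) = n` a dimension count shows that every `Qy` equals `Q(Ax + Bu)` for some
`(x, u) ∈ ker N(Q)`. For `v ∈ ker Q` choose such `(x, u)` with `Q(Ax + Bu) = Q(QAv)`; then
`|QAv|² = ⟨QAv, Ax + Bu⟩ + ⟨Av, Q(QAv - Ax - Bu)⟩ = ⟨v, Qx⟩ = ⟨Qv, x⟩ = 0`.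
-/

theorem LinearMap.range_comp_eq_range_of_finrank_ker_le {K U V W : Type*} [Field K]
    [AddCommGroup U] [Module K U] [AddCommGroup V] [Module K V] [AddCommGroup W] [Module K W]
    [FiniteDimensional K U] [FiniteDimensional K V] (f : U →ₗ[K] V) (g : V →ₗ[K] W)
    (hdim : Module.finrank K U = Module.finrank K V)
    (hker : Module.finrank K (ker (g ∘ₗ f)) ≤ Module.finrank K (ker g)) :
    range (g ∘ₗ f) = range g := by
  refine Submodule.eq_of_le_of_finrank_le (range_comp_le_range f g) ?_
  have := finrank_range_add_finrank_ker (g ∘ₗ f)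
  have := finrank_range_add_finrank_ker g
  omega

theorem Matrix.mulVec_dotProduct_eq_dotProduct_transpose_mulVec {R m n : Type*} [CommRing R]
    [Fintype m] [Fintype n] (M : Matrix m n R) (a : n → R) (b : m → R) :
    (M *ᵥ a) ⬝ᵥ b = a ⬝ᵥ (Mᵀ *ᵥ b) := by
  simp only [dotProduct_comm, dotProduct_mulVec, mulVec_transpose]

section Dissipation

variable {R ι κ : Type*} [CommRing R] [Fintype ι] [Fintype κ] [DecidableEq κ]

def dissipationMatrix (A : Matrix ι ι R) (B : Matrix ι κ R) (Q : Matrix ι ι R) :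
    Matrix (ι ⊕ κ) (ι ⊕ κ) R :=
  fromBlocks (Aᵀ * Q * A - Q) (Aᵀ * Q * B) (Bᵀ * Q * A) (Bᵀ * Q * B + 1)

theorem transpose_mulVec_of_dissipationMatrix_mulVec_eq_zero {A : Matrix ι ι R}
    {B : Matrix ι κ R} {Q : Matrix ι ι R} {z : ι ⊕ κ → R}
    (hz : dissipationMatrix A B Q *ᵥ z = 0) :
    Aᵀ *ᵥ (Q *ᵥ (fromCols A B *ᵥ z)) = Q *ᵥ (z ∘ Sum.inl) ∧
      Bᵀ *ᵥ (Q *ᵥ (fromCols A B *ᵥ z)) = -(z ∘ Sum.inr) := by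
  rw [dissipationMatrix, fromBlocks_mulVec, ← Sum.elim_zero_zero, Sum.elim_eq_iff] at hz
  obtain ⟨h₁, h₂⟩ := hz
  simp only [fromCols_mulVec, mulVec_add, mulVec_mulVec, ← Matrix.mul_assoc]
  constructor
  · rw [sub_mulVec] at h₁
    linear_combination h₁
  · rw [add_mulVec, one_mulVec] at h₂
    linear_combination h₂

variable {K : Type*} [Field K]

theorem finrank_ker_mulVecLin_comp_dissipationMatrix_ker_le (A : Matrix ι ι K)
    (B : Matrix ι κ K) (Q : Matrix ι ι K) :
    Module.finrank K (LinearMap.ker (Q.mulVecLin ∘ₗ (fromCols A B).mulVecLin ∘ₗ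
      (LinearMap.ker (dissipationMatrix A B Q).mulVecLin).subtype)) ≤
      Module.finrank K (LinearMap.ker Q.mulVecLin) := by
  set N := LinearMap.ker (dissipationMatrix A B Q).mulVecLin
  set S := LinearMap.ker (Q.mulVecLin ∘ₗ (fromCols A B).mulVecLin ∘ₗ N.subtype)
  have hkernel (w : S) := transpose_mulVec_of_dissipationMatrix_mulVec_eq_zero
    (LinearMap.mem_ker.mp (w : N).2)
  have hQ (w : S) : Q *ᵥ (fromCols A B *ᵥ (w : N)) = 0 := LinearMap.mem_ker.mp w.2
  let restrictInl : S →ₗ[K] LinearMap.ker Q.mulVecLin :=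
    (LinearMap.funLeft K K Sum.inl ∘ₗ N.subtype ∘ₗ S.subtype).codRestrict _ fun w => by
      change Q *ᵥ (((w : N) : ι ⊕ κ → K) ∘ Sum.inl) = 0
      rw [← (hkernel w).1, hQ w, mulVec_zero]
  refine LinearMap.finrank_le_finrank_of_injective (f := restrictInl)
    ((injective_iff_map_eq_zero _).mpr fun w hw => ?_)
  have hinl : ((w : N) : ι ⊕ κ → K) ∘ Sum.inl = 0 := congrArg Subtype.val hw
  have hinr : ((w : N) : ι ⊕ κ → K) ∘ Sum.inr = 0 := by
    simpa only [hQ w, mulVec_zero, zero_eq_neg] using (hkernel w).2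
  have hzero : ((w : N) : ι ⊕ κ → K) = 0 := by
    rw [← Sum.elim_comp_inl_inr ((w : N) : ι ⊕ κ → K), hinl, hinr, Sum.elim_zero_zero]
  exact Subtype.ext (Subtype.ext hzero)

theorem exists_dissipationMatrix_mulVec_eq_zero_and_mulVec_eq {A : Matrix ι ι K}
    {B : Matrix ι κ K} {Q : Matrix ι ι K}
    (hrank : (dissipationMatrix A B Q).rank = Fintype.card κ) (y : ι → K) :
    ∃ z, dissipationMatrix A B Q *ᵥ z = 0 ∧ Q *ᵥ (fromCols A B *ᵥ z) = Q *ᵥ y := by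
  have hdim : Module.finrank K (LinearMap.ker (dissipationMatrix A B Q).mulVecLin) =
      Module.finrank K (ι → K) := by
    have := LinearMap.finrank_range_add_finrank_ker (dissipationMatrix A B Q).mulVecLin
    rw [← Matrix.rank, hrank] at this
    simp only [Module.finrank_fintype_fun_eq_card, Fintype.card_sum] at this ⊢
    omega
  have hrange := LinearMap.range_comp_eq_range_of_finrank_ker_le _ _ hdim
    (finrank_ker_mulVecLin_comp_dissipationMatrix_ker_le A B Q)
  obtain ⟨⟨z, hz⟩, hQz⟩ := hrange.ge ⟨y, rfl⟩
  exact ⟨z, hz, hQz⟩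

end Dissipation

theorem ker_Q_A_invariant_general
    (n m : ℕ) (A : Matrix (Fin n) (Fin n) ℝ) (B : Matrix (Fin n) (Fin m) ℝ)
    (Q : Matrix (Fin n) (Fin n) ℝ) (hQsymm : Q.IsSymm)
    (hrank : (Matrix.fromBlocks (Aᵀ * Q * A - Q) (Aᵀ * Q * B)
      (Bᵀ * Q * A) (Bᵀ * Q * B + 1)).rank = m) :
    ∀ v : Fin n → ℝ, Q *ᵥ v = 0 → Q *ᵥ (A *ᵥ v) = 0 := by
  intro v hv
  set w := Q *ᵥ (A *ᵥ v)
  obtain ⟨z, hz, hQz⟩ := exists_dissipationMatrix_mulVec_eq_zero_and_mulVec_eq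
    (hrank.trans (Fintype.card_fin m).symm) w
  have hAz := (transpose_mulVec_of_dissipationMatrix_mulVec_eq_zero hz).1
  have h₁ : w ⬝ᵥ (fromCols A B *ᵥ z) = 0 := by
    rw [mulVec_dotProduct_eq_dotProduct_transpose_mulVec, hQsymm.eq,
      mulVec_dotProduct_eq_dotProduct_transpose_mulVec, hAz, dotProduct_comm,
      mulVec_dotProduct_eq_dotProduct_transpose_mulVec, hQsymm.eq, hv, dotProduct_zero]
  have h₂ : w ⬝ᵥ (w - fromCols A B *ᵥ z) = 0 := by
    rw [mulVec_dotProduct_eq_dotProduct_transpose_mulVec, hQsymm.eq, mulVec_sub, hQz, sub_self,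
      dotProduct_zero]
  refine dotProduct_self_eq_zero.mp ?_
  linear_combination h₁ + h₂ - dotProduct_sub w w (fromCols A B *ᵥ z)

theorem ker_Q_A_invariant
    (n m : ℕ) (A : Matrix (Fin n) (Fin n) ℝ) (B : Matrix (Fin n) (Fin m) ℝ)
    (Q : Matrix (Fin n) (Fin n) ℝ) (hQsymm : Q.IsSymm)
    (hpsd : (Matrix.fromBlocks (Aᵀ * Q * A - Q) (Aᵀ * Q * B)
      (Bᵀ * Q * A) (Bᵀ * Q * B + 1)).PosSemidef)
    (hrank : (Matrix.fromBlocks (Aᵀ * Q * A - Q) (Aᵀ * Q * B)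
      (Bᵀ * Q * A) (Bᵀ * Q * B + 1)).rank = m) :
    ∀ v : Fin n → ℝ, Q *ᵥ v = 0 → Q *ᵥ (A *ᵥ v) = 0 :=
  ker_Q_A_invariant_general n m A B Q hQsymm hrank
end
end

section
/- Let (A,B,C,D) with A ∈ ℝ^{n×n}, B ∈ ℝ^{n×m}, C ∈ ℝ^{m×n}, D ∈ ℝ^{m×m} be a minimal realization of an all-pass function and assume A is invertible. Then a symmetric matrix Q ∈ ℝ^{n×n} satisfies the constrained LMI (N(Q) ⪰ 0 and rank N(Q) = m) if and only if I + Bᵀ Q B is positive definite and Q satisfies the homogeneous algebraic Riccati equation Q = Aᵀ Q A − Aᵀ Q B (I + Bᵀ Q B)⁻¹ Bᵀ Q A. Dually, a symmetric matrix P satisfies the constrained LMI (M(P) ⪰ 0 and rank M(P) = m) if and only if I + C P Cᵀ is positive definite and P = A P Aᵀ − A P Cᵀ (I + C P Cᵀ)⁻¹ C P Aᵀ. -/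
open Matrix

noncomputable section

/-!
Write `S = 1 + BᵀQB` and `K = AᵀQB`. Once `S` is invertible, `N(Q)` is congruent to
`diag(AᵀQA - Q - K S⁻¹ Kᵀ, S)`, so `N(Q) ⪰ 0` with rank `m` says exactly that `S ≻ 0` and the
Schur complement (the Riccati residual) vanishes. Invertibility of `S` is forced by `N(Q) ⪰ 0`:
if `Sx = 0` then `(0, x)` is isotropic, so `N(Q)(0, x) = 0`, i.e. `AᵀQBx = 0`; as `A` is
invertible, `QBx = 0` and hence `x = Sx = 0`. The statement for `M(P)` is the one for `N(P)`
with `(A, B)` replaced by `(Aᵀ, Cᵀ)`.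
-/

theorem Submodule.finrank_prod {K V W : Type*} [Field K] [AddCommGroup V] [Module K V]
    [AddCommGroup W] [Module K W] (p : Submodule K V) (q : Submodule K W)
    [FiniteDimensional K p] [FiniteDimensional K q] :
    Module.finrank K (p.prod q) = Module.finrank K p + Module.finrank K q := by
  have h := LinearMap.finrank_range_of_inj (f := p.subtype.prodMap q.subtype)
    (p.injective_subtype.prodMap q.injective_subtype)
  rwa [LinearMap.range_prodMap, Submodule.range_subtype, Submodule.range_subtype,
    Module.finrank_prod] at h

namespace Matrix

section Rank

variable {K : Type*} [Field K] {l l' m m' : Type*}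

theorem rank_eq_zero_iff [Fintype m] {E : Matrix l m K} : E.rank = 0 ↔ E = 0 := by
  rw [rank, Submodule.finrank_eq_zero, LinearMap.range_eq_bot]
  refine ⟨fun h => ?_, fun h => by rw [h, mulVecLin_zero]⟩
  ext i j
  classical
  simpa using congrFun (LinearMap.congr_fun h (Pi.single j 1)) i

theorem rank_fromBlocks_zero_zero [Fintype l'] [Fintype m'] (E : Matrix l l' K)
    (F : Matrix m m' K) : (fromBlocks E 0 0 F).rank = E.rank + F.rank := by
  let e := LinearEquiv.sumArrowLequivProdArrow l m K K
  let e' := LinearEquiv.sumArrowLequivProdArrow l' m' K K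
  have hmul : (fromBlocks E 0 0 F).mulVecLin =
      e.symm.toLinearMap ∘ₗ E.mulVecLin.prodMap F.mulVecLin ∘ₗ e'.toLinearMap := by
    ext v i
    cases i <;> simp [e, e', fromBlocks_mulVec] <;> rfl
  rw [rank, hmul, LinearMap.range_comp, LinearMap.range_comp_of_range_eq_top _ e'.range,
    LinearMap.range_prodMap]
  exact (e.symm.finrank_map_eq _).trans (Submodule.finrank_prod _ _)

theorem rank_fromBlocks_of_invertible₂₂ [Fintype l] [Fintype l'] [Fintype m] [DecidableEq l]
    [DecidableEq l'] [DecidableEq m] (A : Matrix l l' K) (B : Matrix l m K) (C : Matrix m l' K)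
    (D : Matrix m m K) [Invertible D] :
    (fromBlocks A B C D).rank = (A - B * ⅟D * C).rank + Fintype.card m := by
  rw [fromBlocks_eq_of_invertible₂₂, rank_mul_eq_left_of_isUnit_det _ _ (by simp),
    rank_mul_eq_right_of_isUnit_det _ _ (by simp), rank_fromBlocks_zero_zero,
    rank_of_isUnit D (isUnit_of_invertible D)]

end Rank

section PosSemidef

open scoped ComplexOrder

variable {𝕜 : Type*} [RCLike 𝕜] {l m : Type*} [Fintype l] [Fintype m] [DecidableEq m]
  {X : Matrix l l 𝕜} {K : Matrix l m 𝕜} {S : Matrix m m 𝕜}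

theorem PosSemidef.posDef_of_fromBlocks₂₂ (hN : (fromBlocks X K Kᴴ S).PosSemidef)
    (hker : ∀ x, K *ᵥ x = 0 → S *ᵥ x = 0 → x = 0) : S.PosDef := by
  have hS : S.PosSemidef := hN.submatrix Sum.inr
  have hSker : ∀ x, S *ᵥ x = 0 → x = 0 := fun x hx => by
    have hNx : fromBlocks X K Kᴴ S *ᵥ Sum.elim 0 x = 0 :=
      (hN.dotProduct_mulVec_zero_iff _).mp <| by
        simp [fromBlocks_mulVec, Function.star_sumElim, sumElim_dotProduct_sumElim, hx]
    refine hker x (funext fun i => ?_) hx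
    simpa [fromBlocks_mulVec] using congrFun hNx (Sum.inl i)
  refine hS.posDef_iff_isUnit.mpr (mulVec_injective_iff_isUnit.mp fun x y hxy => ?_)
  exact sub_eq_zero.mp (hSker _ (by rw [mulVec_sub, hxy, sub_self]))

theorem PosDef.fromBlocks_posSemidef_and_rank_eq_card_iff (hS : S.PosDef) :
    ((fromBlocks X K Kᴴ S).PosSemidef ∧ (fromBlocks X K Kᴴ S).rank = Fintype.card m) ↔
      X = K * S⁻¹ * Kᴴ := by
  classical
  have := hS.isUnit.invertible
  rw [rank_fromBlocks_of_invertible₂₂, invOf_eq_nonsing_inv, PosDef.fromBlocks₂₂ _ _ hS,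
    Nat.add_eq_right, rank_eq_zero_iff, sub_eq_zero]
  exact and_iff_right_of_imp fun h => by rw [h, sub_self]; exact .zero

theorem fromBlocks_posSemidef_and_rank_eq_card_iff
    (hker : ∀ x, K *ᵥ x = 0 → S *ᵥ x = 0 → x = 0) :
    ((fromBlocks X K Kᴴ S).PosSemidef ∧ (fromBlocks X K Kᴴ S).rank = Fintype.card m) ↔
      S.PosDef ∧ X = K * S⁻¹ * Kᴴ :=
  ⟨fun h => have hS := h.1.posDef_of_fromBlocks₂₂ hker
    ⟨hS, hS.fromBlocks_posSemidef_and_rank_eq_card_iff.mp h⟩,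
   fun ⟨hS, h⟩ => hS.fromBlocks_posSemidef_and_rank_eq_card_iff.mpr h⟩

end PosSemidef

end Matrix

theorem fromBlocks_posSemidef_and_rank_eq_iff_riccati {ι μ : Type*} [Fintype ι]
    [DecidableEq ι] [Fintype μ] [DecidableEq μ] {A : Matrix ι ι ℝ} (B : Matrix ι μ ℝ)
    (hA : IsUnit A) {Q : Matrix ι ι ℝ} (hQ : Q.IsSymm) :
    ((fromBlocks (Aᵀ * Q * A - Q) (Aᵀ * Q * B) (Bᵀ * Q * A) (Bᵀ * Q * B + 1)).PosSemidef ∧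
      (fromBlocks (Aᵀ * Q * A - Q) (Aᵀ * Q * B) (Bᵀ * Q * A) (Bᵀ * Q * B + 1)).rank =
        Fintype.card μ) ↔
    ((1 + Bᵀ * Q * B).PosDef ∧
      Q = Aᵀ * Q * A - Aᵀ * Q * B * (1 + Bᵀ * Q * B)⁻¹ * (Bᵀ * Q * A)) := by
  have hKT : Bᵀ * Q * A = (Aᵀ * Q * B)ᴴ := by
    simp [conjTranspose_eq_transpose_of_trivial, transpose_mul, hQ.eq, Matrix.mul_assoc]
  have hker : ∀ x, (Aᵀ * Q * B) *ᵥ x = 0 → (Bᵀ * Q * B + 1) *ᵥ x = 0 → x = 0 := by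
    intro x hK hS
    have hQBx : Q *ᵥ (B *ᵥ x) = 0 :=
      mulVec_injective_of_isUnit ((isUnit_transpose A).mpr hA) <| by
        rwa [mulVec_zero, mulVec_mulVec, mulVec_mulVec]
    rwa [add_mulVec, one_mulVec, ← mulVec_mulVec, ← mulVec_mulVec, hQBx, mulVec_zero,
      zero_add] at hS
  rw [hKT, fromBlocks_posSemidef_and_rank_eq_card_iff hker, add_comm _ (1 : Matrix μ μ ℝ),
    sub_eq_iff_eq_add', eq_sub_iff_add_eq, eq_comm]

theorem CLMI_iff_riccati_general
    (n m : ℕ) (A : Matrix (Fin n) (Fin n) ℝ) (B : Matrix (Fin n) (Fin m) ℝ)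
    (C : Matrix (Fin m) (Fin n) ℝ)
    (hA : IsUnit A) :
    (∀ Q : Matrix (Fin n) (Fin n) ℝ, Q.IsSymm →
      (((Matrix.fromBlocks (Aᵀ * Q * A - Q) (Aᵀ * Q * B)
          (Bᵀ * Q * A) (Bᵀ * Q * B + 1)).PosSemidef ∧
        (Matrix.fromBlocks (Aᵀ * Q * A - Q) (Aᵀ * Q * B)
          (Bᵀ * Q * A) (Bᵀ * Q * B + 1)).rank = m) ↔
       (((1 : Matrix (Fin m) (Fin m) ℝ) + Bᵀ * Q * B).PosDef ∧
        Q = Aᵀ * Q * A - Aᵀ * Q * B * (1 + Bᵀ * Q * B)⁻¹ * (Bᵀ * Q * A)))) ∧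
    (∀ P : Matrix (Fin n) (Fin n) ℝ, P.IsSymm →
      (((Matrix.fromBlocks (A * P * Aᵀ - P) (A * P * Cᵀ)
          (C * P * Aᵀ) (C * P * Cᵀ + 1)).PosSemidef ∧
        (Matrix.fromBlocks (A * P * Aᵀ - P) (A * P * Cᵀ)
          (C * P * Aᵀ) (C * P * Cᵀ + 1)).rank = m) ↔
       (((1 : Matrix (Fin m) (Fin m) ℝ) + C * P * Cᵀ).PosDef ∧
        P = A * P * Aᵀ - A * P * Cᵀ * (1 + C * P * Cᵀ)⁻¹ * (C * P * Aᵀ)))) := by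
  refine ⟨fun Q hQ => ?_, fun P hP => ?_⟩
  · simpa only [Fintype.card_fin] using fromBlocks_posSemidef_and_rank_eq_iff_riccati B hA hQ
  · simpa only [Fintype.card_fin, transpose_transpose] using
      fromBlocks_posSemidef_and_rank_eq_iff_riccati Cᵀ ((isUnit_transpose A).mpr hA) hP

theorem CLMI_iff_riccati
    (n m : ℕ) (A : Matrix (Fin n) (Fin n) ℝ) (B : Matrix (Fin n) (Fin m) ℝ)
    (C : Matrix (Fin m) (Fin n) ℝ) (D : Matrix (Fin m) (Fin m) ℝ)
    (hreach : Reachable A B) (hobs : Observable A C) (hap : AllPass A B C D)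
    (hA : IsUnit A) :
    (∀ Q : Matrix (Fin n) (Fin n) ℝ, Q.IsSymm →
      (((Matrix.fromBlocks (Aᵀ * Q * A - Q) (Aᵀ * Q * B)
          (Bᵀ * Q * A) (Bᵀ * Q * B + 1)).PosSemidef ∧
        (Matrix.fromBlocks (Aᵀ * Q * A - Q) (Aᵀ * Q * B)
          (Bᵀ * Q * A) (Bᵀ * Q * B + 1)).rank = m) ↔
       (((1 : Matrix (Fin m) (Fin m) ℝ) + Bᵀ * Q * B).PosDef ∧
        Q = Aᵀ * Q * A - Aᵀ * Q * B * (1 + Bᵀ * Q * B)⁻¹ * (Bᵀ * Q * A)))) ∧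
    (∀ P : Matrix (Fin n) (Fin n) ℝ, P.IsSymm →
      (((Matrix.fromBlocks (A * P * Aᵀ - P) (A * P * Cᵀ)
          (C * P * Aᵀ) (C * P * Cᵀ + 1)).PosSemidef ∧
        (Matrix.fromBlocks (A * P * Aᵀ - P) (A * P * Cᵀ)
          (C * P * Aᵀ) (C * P * Cᵀ + 1)).rank = m) ↔
       (((1 : Matrix (Fin m) (Fin m) ℝ) + C * P * Cᵀ).PosDef ∧
        P = A * P * Aᵀ - A * P * Cᵀ * (1 + C * P * Cᵀ)⁻¹ * (C * P * Aᵀ)))) :=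
  CLMI_iff_riccati_general n m A B C hA
end
end

section
/- Let A ∈ ℝ^{n×n} be invertible, C ∈ ℝ^{m×n}, and let P ∈ ℝ^{n×n} be a symmetric matrix such that I + C P Cᵀ is positive definite and P satisfies the homogeneous algebraic Riccati equation P = A P Aᵀ − A P Cᵀ (I + C P Cᵀ)⁻¹ C P Aᵀ. Define L := (I + C P Cᵀ)^{1/2} (the positive semidefinite square root) and G := A P Cᵀ L⁻¹. Then the transfer function Q_L(z) = C(zI−A)⁻¹G + L is all-pass. -/
open Matrix

noncomputable section

/-! With `G = A P Cᵀ L⁻¹`, the Riccati equation reads `G Gᵀ = A P Aᵀ - P`, while `G Lᵀ = A P Cᵀ`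
and `L Lᵀ = I + C P Cᵀ`. Writing `M = (zI - A)⁻¹` and `N = (z⁻¹I - Aᵀ)⁻¹`, the product
`Q(z) Q(z⁻¹)ᵀ` therefore expands to `I + C (M (A P Aᵀ - P) N + M A P + P Aᵀ N + P) Cᵀ`, and the
bracket vanishes for every `P`: multiplied by `zI - A` on the left and `z⁻¹I - Aᵀ` on the right
it becomes an identity of polynomials in `z` and `z⁻¹`. -/

section Stein

variable {K : Type*} [Field K] {n k : Type*} [Fintype n] [DecidableEq n] [Fintype k]
  [DecidableEq k]

theorem sub_mul_mul_eq_resolvent_expansion (A : Matrix n n K) (P : Matrix n k K)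
    (B : Matrix k k K) {z : K} (hz : z ≠ 0) :
    P - A * P * B = (z • 1 - A) * P * (z⁻¹ • 1 - B) + A * P * (z⁻¹ • 1 - B)
      + (z • 1 - A) * P * B := by
  simp only [Matrix.mul_sub, Matrix.sub_mul, Matrix.smul_mul, Matrix.mul_smul, smul_sub,
    smul_smul, Matrix.one_mul, Matrix.mul_one, inv_mul_cancel₀ hz, one_smul]
  abel

theorem resolvent_mul_sub_mul_mul_resolvent (A : Matrix n n K) (P : Matrix n k K)
    (B : Matrix k k K) {z : K} (hz : z ≠ 0) (hA : IsUnit (z • 1 - A).det)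
    (hB : IsUnit (z⁻¹ • 1 - B).det) :
    (z • 1 - A)⁻¹ * (P - A * P * B) * (z⁻¹ • 1 - B)⁻¹
      = P + (z • 1 - A)⁻¹ * A * P + P * B * (z⁻¹ • 1 - B)⁻¹ := by
  rw [sub_mul_mul_eq_resolvent_expansion A P B hz]
  simp only [Matrix.mul_add, Matrix.add_mul, Matrix.mul_assoc,
    Matrix.mul_nonsing_inv _ hB, Matrix.mul_one, Matrix.nonsing_inv_mul_cancel_left _ _ hA]

end Stein

theorem allPass_of_stein {N M : Type*} [Fintype N] [DecidableEq N] [Fintype M] [DecidableEq M]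
    {A : Matrix N N ℝ} {B : Matrix N M ℝ} {C : Matrix M N ℝ} {D : Matrix M M ℝ}
    {P : Matrix N N ℝ} (hP : P.IsSymm) (hBB : B * Bᵀ = A * P * Aᵀ - P)
    (hBD : B * Dᵀ = A * P * Cᵀ) (hDD : D * Dᵀ = 1 + C * P * Cᵀ) : AllPass A B C D := by
  intro z hz hX hY
  have hDB : D * Bᵀ = C * P * Aᵀ := by
    simpa [Matrix.transpose_mul, hP.eq, Matrix.mul_assoc] using congrArg transpose hBD
  have hres : (z • 1 - A)⁻¹ * (B * Bᵀ) * (z⁻¹ • 1 - Aᵀ)⁻¹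
      = -(P + (z • 1 - A)⁻¹ * A * P + P * Aᵀ * (z⁻¹ • 1 - Aᵀ)⁻¹) := by
    rw [hBB, ← neg_sub P, Matrix.mul_neg, Matrix.neg_mul, resolvent_mul_sub_mul_mul_resolvent A P Aᵀ
      hz ((isUnit_iff_isUnit_det _).mp hX) ((isUnit_iff_isUnit_det _).mp hY)]
  calc (C * (z • 1 - A)⁻¹ * B + D) * (Bᵀ * (z⁻¹ • 1 - Aᵀ)⁻¹ * Cᵀ + Dᵀ)
      = C * ((z • 1 - A)⁻¹ * (B * Bᵀ) * (z⁻¹ • 1 - Aᵀ)⁻¹) * Cᵀ + C * (z • 1 - A)⁻¹ * (B * Dᵀ)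
        + (D * Bᵀ) * (z⁻¹ • 1 - Aᵀ)⁻¹ * Cᵀ + D * Dᵀ := by
        simp only [Matrix.mul_add, Matrix.add_mul, Matrix.mul_assoc]
        abel
    _ = C * ((z • 1 - A)⁻¹ * (B * Bᵀ) * (z⁻¹ • 1 - Aᵀ)⁻¹
        + (P + (z • 1 - A)⁻¹ * A * P + P * Aᵀ * (z⁻¹ • 1 - Aᵀ)⁻¹)) * Cᵀ + 1 := by
        rw [hBD, hDB, hDD]
        simp only [Matrix.mul_add, Matrix.add_mul, Matrix.mul_assoc]
        abel
    _ = 1 := by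
        rw [hres, neg_add_cancel, Matrix.mul_zero, Matrix.zero_mul, zero_add]

theorem isUnit_det_of_mul_self_eq {K M : Type*} [CommRing K] [Fintype M] [DecidableEq M]
    {L S : Matrix M M K} (hLS : L * L = S) (hS : IsUnit S.det) : IsUnit L.det :=
  isUnit_of_mul_isUnit_left (by rwa [← det_mul, hLS])

theorem riccati_solution_gives_allpass_factor_general
    (n m : ℕ) (A : Matrix (Fin n) (Fin n) ℝ) (C : Matrix (Fin m) (Fin n) ℝ)
    (P : Matrix (Fin n) (Fin n) ℝ) (hPsymm : P.IsSymm)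
    (hpos : ((1 : Matrix (Fin m) (Fin m) ℝ) + C * P * Cᵀ).PosDef)
    (hric : P = A * P * Aᵀ - A * P * Cᵀ * (1 + C * P * Cᵀ)⁻¹ * (C * P * Aᵀ)) :
    ∀ L : Matrix (Fin m) (Fin m) ℝ, L.PosSemidef →
      L * L = 1 + C * P * Cᵀ →
      AllPass A (A * P * Cᵀ * L⁻¹) C L := by
  intro L hL hLL
  have hLsymm : Lᵀ = L := hL.1
  have hLdet : IsUnit L.det := isUnit_det_of_mul_self_eq hLL hpos.det_pos.ne'.isUnit
  refine allPass_of_stein hPsymm ?_ ?_ (by rw [hLsymm, hLL])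
  · calc A * P * Cᵀ * L⁻¹ * (A * P * Cᵀ * L⁻¹)ᵀ
        = A * P * Cᵀ * (L * L)⁻¹ * (C * P * Aᵀ) := by
          simp [Matrix.transpose_mul, transpose_nonsing_inv, hLsymm, hPsymm.eq,
            Matrix.mul_inv_rev, Matrix.mul_assoc]
      _ = A * P * Aᵀ - P := by
          rw [hLL]
          exact eq_sub_of_add_eq' (eq_sub_iff_add_eq.mp hric)
  · rw [hLsymm, Matrix.nonsing_inv_mul_cancel_right _ _ hLdet]

theorem riccati_solution_gives_allpass_factor
    (n m : ℕ) (A : Matrix (Fin n) (Fin n) ℝ) (C : Matrix (Fin m) (Fin n) ℝ)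
    (hA : IsUnit A)
    (P : Matrix (Fin n) (Fin n) ℝ) (hPsymm : P.IsSymm)
    (hpos : ((1 : Matrix (Fin m) (Fin m) ℝ) + C * P * Cᵀ).PosDef)
    (hric : P = A * P * Aᵀ - A * P * Cᵀ * (1 + C * P * Cᵀ)⁻¹ * (C * P * Aᵀ)) :
    ∀ L : Matrix (Fin m) (Fin m) ℝ, L.PosSemidef →
      L * L = 1 + C * P * Cᵀ →
      AllPass A (A * P * Cᵀ * L⁻¹) C L :=
  riccati_solution_gives_allpass_factor_general n m A C P hPsymm hpos hric
end
end

section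
/- Let A ∈ ℝ^{n×n}, and let B = [B₁ | B₂] ∈ ℝ^{n×m} with B₁ ∈ ℝ^{n×(m−p)} and B₂ ∈ ℝ^{n×p}, such that the pair (A, B) is reachable. Let U ∈ ℝ^{m×m} be orthogonal. Define Ā := [[0_{p×p}, 0],[B₂, A]] ∈ ℝ^{(p+n)×(p+n)} and B̄ := [[0_{p×(m−p)}, I_p],[B₁, 0_{n×p}]]·U ∈ ℝ^{(p+n)×m}. Then the pair (Ā, B̄) is reachable. -/
open Matrix

noncomputable section

/-!
Write the extended state as `(ξ, x)` with `ξ ∈ ℝ^p`, and let `Ā`, `B̄` be the extended pair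
before the rotation by `U`. The columns `(e_j, 0)` of `B̄` span the `ξ`-block, and
`Ā (e_j, 0) = (0, B₂ e_j)`. Since `Ā` acts on vectors `(0, x)` as `A` does, the vectors
`(0, Aᵏ B₁ e_i) = Āᵏ (0, B₁ e_i)` and `(0, Aᵏ B₂ e_j) = Āᵏ⁺¹ (e_j, 0)` are reachable, so
reachability of `(A, [B₁ | B₂])` gives the `x`-block. Right multiplication by the invertible `U`
does not change the column span of `B̄`.
-/

namespace Matrix

def reachableSubspace {N M : Type*} [Fintype N] [DecidableEq N] [Fintype M]
    (A : Matrix N N ℝ) (B : Matrix N M ℝ) : Submodule ℝ (N → ℝ) :=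
  Submodule.span ℝ {v | ∃ k < Fintype.card N, ∃ j : M, v = (A ^ k) *ᵥ (fun i => B i j)}

theorem col_mul {R l m n : Type*} [CommSemiring R] [Fintype m] (C : Matrix l m R)
    (V : Matrix m n R) (j : n) : (C * V).col j = ∑ i, V i j • C.col i := by
  ext r
  simp [mul_apply, Finset.sum_apply, mul_comm]

section Reachable

variable {N M M' : Type*} [Fintype N] [DecidableEq N] [Fintype M] [Fintype M']
  {A : Matrix N N ℝ}

theorem reachable_iff_reachableSubspace_eq_top {B : Matrix N M ℝ} :
    Reachable A B ↔ reachableSubspace A B = ⊤ :=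
  Iff.rfl

theorem pow_mulVec_col_mem_reachableSubspace (B : Matrix N M ℝ) {k : ℕ}
    (hk : k < Fintype.card N) (j : M) : (A ^ k) *ᵥ B.col j ∈ reachableSubspace A B :=
  Submodule.subset_span ⟨k, hk, j, rfl⟩

theorem reachableSubspace_mul_le (C : Matrix N M' ℝ) (V : Matrix M' M ℝ) :
    reachableSubspace A (C * V) ≤ reachableSubspace A C := by
  refine Submodule.span_le.mpr ?_
  rintro _ ⟨k, hk, j, rfl⟩
  change (A ^ k) *ᵥ (C * V).col j ∈ _
  rw [col_mul, mulVec_sum]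
  exact Submodule.sum_mem _ fun i _ => by
    rw [mulVec_smul]
    exact Submodule.smul_mem _ _ (pow_mulVec_col_mem_reachableSubspace C hk i)

theorem Reachable.of_mul {C : Matrix N M' ℝ} {V : Matrix M' M ℝ} (h : Reachable A (C * V)) :
    Reachable A C :=
  eq_top_iff.mpr (h ▸ reachableSubspace_mul_le C V)

theorem Reachable.mul_of_mul_eq_one [DecidableEq M] {B : Matrix N M ℝ} {U V : Matrix M M ℝ}
    (h : Reachable A B) (hUV : U * V = 1) : Reachable A (B * U) :=
  Reachable.of_mul (V := V) (by rwa [Matrix.mul_assoc, hUV, Matrix.mul_one])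

end Reachable

section Extension

variable {n p m₁ : Type*} [Fintype n] [Fintype p]

theorem fromBlocks_zero₁₂_mulVec_elim_zero (A₁₁ : Matrix p p ℝ) (A₂₁ : Matrix n p ℝ)
    (A₂₂ : Matrix n n ℝ) (y : n → ℝ) :
    fromBlocks A₁₁ 0 A₂₁ A₂₂ *ᵥ Sum.elim 0 y = Sum.elim (0 : p → ℝ) (A₂₂ *ᵥ y) := by
  simp [fromBlocks_mulVec]

variable [DecidableEq n] [DecidableEq p]

theorem fromBlocks_zero₁₂_pow_mulVec_elim_zero (A₁₁ : Matrix p p ℝ) (A₂₁ : Matrix n p ℝ)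
    (A₂₂ : Matrix n n ℝ) (k : ℕ) (y : n → ℝ) :
    (fromBlocks A₁₁ 0 A₂₁ A₂₂ ^ k) *ᵥ Sum.elim 0 y = Sum.elim (0 : p → ℝ) ((A₂₂ ^ k) *ᵥ y) := by
  induction k with
  | zero => simp
  | succ k ih =>
    rw [pow_succ', ← mulVec_mulVec, ih, fromBlocks_zero₁₂_mulVec_elim_zero, mulVec_mulVec,
      ← pow_succ']

theorem reachable_fromBlocks_of_reachable_fromCols [Fintype m₁] {A : Matrix n n ℝ}
    {B₁ : Matrix n m₁ ℝ} {B₂ : Matrix n p ℝ} (h : Reachable A (fromCols B₁ B₂)) :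
    Reachable (fromBlocks (0 : Matrix p p ℝ) 0 B₂ A)
      (fromBlocks (0 : Matrix p m₁ ℝ) (1 : Matrix p p ℝ) B₁ 0) := by
  set Aext := fromBlocks (0 : Matrix p p ℝ) 0 B₂ A
  set Bext := fromBlocks (0 : Matrix p m₁ ℝ) (1 : Matrix p p ℝ) B₁ 0
  set S := reachableSubspace Aext Bext
  have hcard : Fintype.card (p ⊕ n) = Fintype.card p + Fintype.card n := Fintype.card_sum
  have col_inl (j : m₁) : Bext.col (Sum.inl j) = Sum.elim (0 : p → ℝ) (B₁.col j) := by
    ext (i | i) <;> simp [Bext]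
  have col_inr (j : p) : Bext.col (Sum.inr j) = Pi.single (Sum.inl j) 1 := by
    ext (i | i) <;> simp [Bext, one_apply, Pi.single_apply]
  have Aext_col_inl (j : p) : Aext.col (Sum.inl j) = Sum.elim (0 : p → ℝ) (B₂.col j) := by
    ext (i | i) <;> simp [Aext]
  have single_inl_mem (j : p) : Pi.single (Sum.inl j) 1 ∈ S := by
    have hk : 0 < Fintype.card (p ⊕ n) := Fintype.card_pos_iff.mpr ⟨Sum.inl j⟩
    have := pow_mulVec_col_mem_reachableSubspace (A := Aext) Bext hk (Sum.inr j)
    rwa [pow_zero, one_mulVec, col_inr] at this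
  have elim_zero_mem (y : n → ℝ) : Sum.elim (0 : p → ℝ) y ∈ S := by
    suffices (⊤ : Submodule ℝ (n → ℝ)).map (Sum.elimZeroLeft (κ := p)) ≤ S from
      this ⟨y, trivial, rfl⟩
    rw [← reachable_iff_reachableSubspace_eq_top.mp h, reachableSubspace, Submodule.map_span_le]
    rintro _ ⟨k, hk, j | j, rfl⟩
    · have hk' : k < Fintype.card (p ⊕ n) := by omega
      have := pow_mulVec_col_mem_reachableSubspace (A := Aext) Bext hk' (Sum.inl j)
      rwa [col_inl, fromBlocks_zero₁₂_pow_mulVec_elim_zero] at this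
    · have hk' : k + 1 < Fintype.card (p ⊕ n) := by
        have := Fintype.card_pos_iff.mpr ⟨j⟩; omega
      have := pow_mulVec_col_mem_reachableSubspace (A := Aext) Bext hk' (Sum.inr j)
      rwa [col_inr, pow_succ, ← mulVec_mulVec, mulVec_single_one, Aext_col_inl,
        fromBlocks_zero₁₂_pow_mulVec_elim_zero] at this
  rw [reachable_iff_reachableSubspace_eq_top, eq_top_iff, ← (Pi.basisFun ℝ (p ⊕ n)).span_eq,
    Submodule.span_le]
  rintro _ ⟨i | i, rfl⟩
  · simpa using single_inl_mem i
  · simpa [← Sum.elim_zero_single] using elim_zero_mem (Pi.single i 1)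

end Extension

end Matrix

theorem extended_pair_reachable
    (n m₁ m₂ : ℕ) (A : Matrix (Fin n) (Fin n) ℝ)
    (B₁ : Matrix (Fin n) (Fin m₁) ℝ) (B₂ : Matrix (Fin n) (Fin m₂) ℝ)
    (hreach : Reachable A (Matrix.fromCols B₁ B₂))
    (U : Matrix (Fin m₁ ⊕ Fin m₂) (Fin m₁ ⊕ Fin m₂) ℝ) (hU : Uᵀ * U = 1) :
    Reachable
      (Matrix.fromBlocks (0 : Matrix (Fin m₂) (Fin m₂) ℝ) 0 B₂ A)
      (Matrix.fromBlocks (0 : Matrix (Fin m₂) (Fin m₁) ℝ) 1 B₁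
        (0 : Matrix (Fin n) (Fin m₂) ℝ) * U) :=
  (reachable_fromBlocks_of_reachable_fromCols hreach).mul_of_mul_eq_one (mul_eq_one_comm.mp hU)
end
end

section
/- Let A ∈ ℝ^{n×n}, B ∈ ℝ^{n×m}, C ∈ ℝ^{m×n}, D ∈ ℝ^{m×m} with A and D invertible, (A,B) reachable, (A,C) observable, and Q(z) = C(zI−A)⁻¹B + D all-pass. Let T ∈ ℝ^{n×n} be an invertible matrix satisfying T⁻¹A⁻ᵀT = A − BD⁻¹C, T⁻¹A⁻ᵀCᵀ = BD⁻¹, BᵀA⁻ᵀT = D⁻¹C, and D⁻¹ = Dᵀ − BᵀA⁻ᵀCᵀ. Then T is symmetric: T = Tᵀ. -/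
open Matrix

noncomputable section

/-!
Both `T` and `Tᵀ` solve the Stein-type system `Aᵀ X A = X + Cᵀ C`, `Aᵀ X B = Cᵀ D`: for `T` this is
`h1`, `h2` with the inverses cleared; for `Tᵀ` the first equation is the transpose of the one for
`T`, and the second is the transpose of `Bᵀ T A = Dᵀ C`, which follows from `h3`, `h4`. The
difference `K` of two solutions satisfies `K = (Aᵀ)ᵏ K Aᵏ` and `K B = 0`, so `K` annihilates every
`Aᵏ B`, and reachability forces `K = 0`.
-/

variable {N M P : Type*} [Fintype N] [DecidableEq N] [Fintype M]

theorem Reachable.eq_zero_of_mul_pow_mul_eq_zero {A : Matrix N N ℝ} {B : Matrix N M ℝ}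
    (hAB : Reachable A B) {X : Matrix P N ℝ} (hX : ∀ k < Fintype.card N, X * A ^ k * B = 0) :
    X = 0 := by
  classical
  have hker : LinearMap.ker X.mulVecLin = ⊤ := by
    refine top_le_iff.1 (hAB ▸ Submodule.span_le.2 ?_)
    rintro _ ⟨k, hk, j, rfl⟩
    change X *ᵥ (A ^ k *ᵥ B.col j) = 0
    rw [← mulVec_single_one, mulVec_mulVec, mulVec_mulVec, hX k hk, zero_mulVec]
  exact Matrix.toLin'.injective (by rw [toLin'_apply', LinearMap.ker_eq_top.1 hker, map_zero])

theorem Reachable.eq_zero_of_mul_mul_eq_self {A : Matrix N N ℝ} {B : Matrix N M ℝ}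
    (hAB : Reachable A B) {F K : Matrix N N ℝ} (hF : IsUnit F) (hK : F * K * A = K)
    (hKB : F * K * B = 0) : K = 0 := by
  have hpow (k : ℕ) : F ^ k * K * A ^ k = K := by
    induction k with
    | zero => simp
    | succ k ih =>
      calc F ^ (k + 1) * K * A ^ (k + 1) = F ^ k * (F * K * A) * A ^ k := by
            rw [pow_succ, pow_succ']; simp only [Matrix.mul_assoc]
        _ = K := by rw [hK, ih]
  have := hF.invertible
  have hB : K * B = 0 := (Matrix.mul_right_inj_of_invertible F).1 <| by
    rw [← Matrix.mul_assoc, hKB, Matrix.mul_zero]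
  refine hAB.eq_zero_of_mul_pow_mul_eq_zero fun k _ => ?_
  have := (hF.pow k).invertible
  refine (Matrix.mul_right_inj_of_invertible (F ^ k)).1 ?_
  simp only [Matrix.mul_zero, ← Matrix.mul_assoc, hpow, hB]

theorem Reachable.eq_of_transpose_mul_mul_eq {A : Matrix N N ℝ} {B : Matrix N M ℝ}
    (hAB : Reachable A B) (hA : IsUnit A) {X Y Q : Matrix N N ℝ} {S : Matrix N M ℝ}
    (hXA : Aᵀ * X * A = X + Q) (hYA : Aᵀ * Y * A = Y + Q)
    (hXB : Aᵀ * X * B = S) (hYB : Aᵀ * Y * B = S) : X = Y := by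
  refine sub_eq_zero.1 (hAB.eq_zero_of_mul_mul_eq_self ((isUnit_transpose A).2 hA) ?_ ?_)
  · rw [Matrix.mul_sub, Matrix.sub_mul, hXA, hYA, add_sub_add_right_eq_sub]
  · rw [Matrix.mul_sub, Matrix.sub_mul, hXB, hYB, sub_self]

theorem T_is_symmetric_general
    (n m : ℕ) (A : Matrix (Fin n) (Fin n) ℝ) (B : Matrix (Fin n) (Fin m) ℝ)
    (C : Matrix (Fin m) (Fin n) ℝ) (D : Matrix (Fin m) (Fin m) ℝ)
    (hA : IsUnit A) (hD : IsUnit D)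
    (hreach : Reachable A B)
    (T : Matrix (Fin n) (Fin n) ℝ) (hT : IsUnit T)
    (h1 : T⁻¹ * Aᵀ⁻¹ * T = A - B * D⁻¹ * C)
    (h2 : T⁻¹ * Aᵀ⁻¹ * Cᵀ = B * D⁻¹)
    (h3 : Bᵀ * Aᵀ⁻¹ * T = D⁻¹ * C)
    (h4 : D⁻¹ = Dᵀ - Bᵀ * Aᵀ⁻¹ * Cᵀ) :
    T = Tᵀ := by
  have := hA.invertible
  have := hD.invertible
  have := hT.invertible
  have hTB : Aᵀ * T * B = Cᵀ * D := by
    calc Aᵀ * T * B = Aᵀ * T * (B * D⁻¹) * D := by simp [Matrix.mul_assoc]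
      _ = Cᵀ * D := by simp [← h2, Matrix.mul_assoc]
  have hTA : Aᵀ * T * A = T + Cᵀ * C := by
    calc Aᵀ * T * A = Aᵀ * T * (A - B * D⁻¹ * C) + Aᵀ * T * B * D⁻¹ * C := by
          simp [Matrix.mul_sub, Matrix.mul_assoc]
      _ = T + Cᵀ * C := by
          rw [← h1, hTB]; simp [Matrix.mul_assoc]
  have hTtB : Aᵀ * Tᵀ * B = Cᵀ * D := by
    suffices Bᵀ * T * A = Dᵀ * C by
      simpa [Matrix.transpose_mul, Matrix.mul_assoc] using congrArg transpose this
    calc Bᵀ * T * A = Bᵀ * Aᵀ⁻¹ * (Aᵀ * T * A) := by simp [Matrix.mul_assoc]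
      _ = (D⁻¹ + Bᵀ * Aᵀ⁻¹ * Cᵀ) * C := by
          rw [hTA, Matrix.mul_add, h3, Matrix.add_mul]; simp [Matrix.mul_assoc]
      _ = Dᵀ * C := by rw [h4, sub_add_cancel]
  refine hreach.eq_of_transpose_mul_mul_eq hA hTA ?_ hTB hTtB
  simpa [Matrix.transpose_mul, Matrix.mul_assoc] using congrArg transpose hTA

theorem T_is_symmetric
    (n m : ℕ) (A : Matrix (Fin n) (Fin n) ℝ) (B : Matrix (Fin n) (Fin m) ℝ)
    (C : Matrix (Fin m) (Fin n) ℝ) (D : Matrix (Fin m) (Fin m) ℝ)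
    (hA : IsUnit A) (hD : IsUnit D)
    (hreach : Reachable A B) (hobs : Observable A C) (hap : AllPass A B C D)
    (T : Matrix (Fin n) (Fin n) ℝ) (hT : IsUnit T)
    (h1 : T⁻¹ * Aᵀ⁻¹ * T = A - B * D⁻¹ * C)
    (h2 : T⁻¹ * Aᵀ⁻¹ * Cᵀ = B * D⁻¹)
    (h3 : Bᵀ * Aᵀ⁻¹ * T = D⁻¹ * C)
    (h4 : D⁻¹ = Dᵀ - Bᵀ * Aᵀ⁻¹ * Cᵀ) :
    T = Tᵀ :=
  T_is_symmetric_general n m A B C D hA hD hreach T hT h1 h2 h3 h4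
end
end
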